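/- arXiv:1804.06894 — 4 statements merged into one kernel-verified Lean document; each statement's English description precedes it below -/
import Mathlib

section
/- Let H : ℕ → ℕ be the monotone function defined in the Ladner-style construction relative to the machine M_H and an enumeration (M_i) of clocked deterministic polynomial-time TMs. If the run fitting problem RF(M_H) is decidable in polynomial time, then H is eventually constant (H(n) = O(1)); and if RF(M_H) is not in PTime, then H(n) → ∞ as n → ∞. -/
/-- A non-deterministic Turing machine with a single one-sided infinite tape.
`δ q a` is the set of transitions `(q', b, dir)` available in state `q` reading `a`
(`dir = true` means move right, `dir = false` move left). -/
structure NTM where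
  Q : Type
  A : Type
  finQ : Finite Q
  finA : Finite A
  blank : A
  q0 : Q
  qa : Q
  δ : Q → A → Set (Q × A × Bool)

namespace NTM

/-- Symbols occurring in the string representation `vqw` of configurations. -/
abbrev Sym (M : NTM) : Type := M.Q ⊕ M.A

variable (M : NTM)

/-- One computation step on string representations of configurations (length preserving). -/
inductive Step : List M.Sym → List M.Sym → Prop
  | right (u v : List M.Sym) (q q' : M.Q) (a b : M.A)
      (h : (q', b, true) ∈ M.δ q a) :
      Step (u ++ [Sum.inl q, Sum.inr a] ++ v) (u ++ [Sum.inr b, Sum.inl q'] ++ v)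
  | left (u v : List M.Sym) (q q' : M.Q) (a b c : M.A)
      (h : (q', b, false) ∈ M.δ q a) :
      Step (u ++ [Sum.inr c, Sum.inl q, Sum.inr a] ++ v)
           (u ++ [Sum.inl q', Sum.inr c, Sum.inr b] ++ v)

/-- A string over `Sym` is a configuration if it contains exactly one state symbol. -/
def IsConfig (l : List M.Sym) : Prop := (l.filter Sum.isLeft).length = 1

/-- A run of `M`: a nonempty sequence of configurations, each obtained from the previous
one by a computation step (all configurations have the same length). -/
def IsRun (cs : List (List M.Sym)) : Prop :=
  cs ≠ [] ∧ (∀ c ∈ cs, M.IsConfig c) ∧ cs.Chain' M.Step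

/-- A run is accepting if its last configuration contains the accepting state. -/
def Accepting (cs : List (List M.Sym)) : Prop :=
  ∃ c, cs.getLast? = some c ∧ Sum.inl M.qa ∈ c

/-- A partial configuration: a string over `Sym ∪ {⋆}` (`⋆ = none`) with at most one
state symbol. -/
def IsPConfig (l : List (Option M.Sym)) : Prop :=
  (l.filter fun s => (s.map Sum.isLeft).getD false).length ≤ 1

/-- A configuration matches a partial configuration if they have the same length and agree
on all non-wildcard positions. -/
def MatchesC (c : List M.Sym) (p : List (Option M.Sym)) : Prop :=
  List.Forall₂ (fun s o => ∀ s' : M.Sym, o = some s' → s' = s) c p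

/-- A partial run: a nonempty sequence of partial configurations of equal length whose first
element starts with the initial state and contains no other state symbol. -/
def IsPRun (ps : List (List (Option M.Sym))) : Prop :=
  ps ≠ [] ∧ (∀ p ∈ ps, M.IsPConfig p) ∧ (∀ p ∈ ps, ∀ p' ∈ ps, p.length = p'.length) ∧
  ∃ rest, ps.head? = some (some (Sum.inl M.q0) :: rest) ∧
    ∀ s ∈ rest, ∀ q : M.Q, s ≠ some (Sum.inl q)

/-- A run matches a partial run if they have the same length and corresponding
configurations match. -/
def MatchesRun (cs : List (List M.Sym)) (ps : List (List (Option M.Sym))) : Prop :=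
  List.Forall₂ M.MatchesC cs ps

/-- The run fitting problem for `M` (as a set of partial runs): decide whether a given
partial run of `M` is matched by some accepting run of `M`. -/
def RFit (ps : List (List (Option M.Sym))) : Prop :=
  M.IsPRun ps ∧ ∃ cs, M.IsRun cs ∧ M.Accepting cs ∧ M.MatchesRun cs ps

/-- Encoding of a partial run as a string, using a fresh separator symbol. -/
def encPR (ps : List (List (Option M.Sym))) : List (Option M.Sym ⊕ Unit) :=
  List.intercalate [Sum.inr ()] (ps.map (List.map Sum.inl))

/-- The run fitting problem for `M` as a formal language. -/
def RFLang : Set (List (Option M.Sym ⊕ Unit)) :=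
  { w | ∃ ps, M.RFit ps ∧ w = M.encPR ps }

/-- The initial configuration on input `x` (via the injection `ι` of the input alphabet into
the tape alphabet), padded with `space` blanks. -/
def initConfig {A' : Type} (ι : A' → M.A) (x : List A') (space : ℕ) : List M.Sym :=
  Sum.inl M.q0 :: (x.map fun a => Sum.inr (ι a)) ++ List.replicate space (Sum.inr M.blank)

/-- `M` accepts `x` within `t` steps (and `t` extra tape cells). -/
def AcceptsIn {A' : Type} (ι : A' → M.A) (x : List A') (t : ℕ) : Prop :=
  ∃ cs, M.IsRun cs ∧ cs.head? = some (M.initConfig ι x t) ∧ cs.length ≤ t + 1 ∧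
    M.Accepting cs

end NTM

/-- A Turing machine is deterministic if each state/symbol pair admits at most one
transition. -/
def NTM.Deterministic (M : NTM) : Prop := ∀ q a, (M.δ q a).Subsingleton

/-- A language is in PTime if it is accepted by a deterministic Turing machine in
polynomial time. -/
def InP {A' : Type} (L : Set (List A')) : Prop :=
  ∃ M : NTM, M.Deterministic ∧ ∃ ι : A' → M.A, Function.Injective ι ∧ ∃ p : Polynomial ℕ,
    ∀ x, x ∈ L ↔ M.AcceptsIn ι x (p.eval x.length)

/-!
If `RF(M_H)` is in PTime it equals some `L(M_i)`, and then `H n ≤ i` for every `n`: either `i`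
is a candidate below `log log n`, or `H n ≤ log log n ≤ i`. Conversely a monotone `ℕ`-valued
function that does not tend to infinity is eventually equal to some `v`; since `log log n` and
`log n` tend to infinity, `v` is then eventually a genuine candidate, so `L(M_v)` agrees with
`RF(M_H)` on strings of every length, which puts `RF(M_H)` in PTime.
-/

open Filter

theorem Nat.tendsto_log_atTop {b : ℕ} (hb : 1 < b) : Tendsto (Nat.log b) atTop atTop :=
  (tendsto_atTop_atTop_iff_of_monotone Nat.log_monotone).2 fun k => ⟨b ^ k, (Nat.log_pow hb k).ge⟩

theorem Monotone.exists_eventually_eq_of_not_tendsto_atTop {ι : Type*} [Preorder ι] {f : ι → ℕ}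
    (hf : Monotone f) (h : ¬ Tendsto f atTop atTop) : ∃ v, ∀ᶠ n in atTop, f n = v := by
  obtain ⟨v, hv⟩ := (tendsto_atTop_of_monotone hf).resolve_left h
  exact ⟨v, tendsto_pure.1 (nhds_discrete ℕ ▸ hv)⟩

section Ladner

variable {α : Type*}

/-- `sInf (ladnerCandidates Lang L n)` is the paper's `H(n)`; the singleton supplies the default
value `log log n`. -/
def ladnerCandidates (Lang : ℕ → Set (List α)) (L : Set (List α)) (n : ℕ) : Set ℕ :=
  {i | i < Nat.log 2 (Nat.log 2 n) ∧
    ∀ z : List α, z.length ≤ Nat.log 2 n → (z ∈ Lang i ↔ z ∈ L)} ∪ {Nat.log 2 (Nat.log 2 n)}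

theorem sInf_ladnerCandidates_le {Lang : ℕ → Set (List α)} {L : Set (List α)} {i : ℕ}
    (hi : Lang i = L) (n : ℕ) : sInf (ladnerCandidates Lang L n) ≤ i := by
  by_cases hlt : i < Nat.log 2 (Nat.log 2 n)
  · exact Nat.sInf_le (Or.inl ⟨hlt, fun z _ => by rw [hi]⟩)
  · exact (Nat.sInf_le (Or.inr rfl)).trans (not_lt.1 hlt)

theorem eq_of_eventually_sInf_ladnerCandidates_eq {Lang : ℕ → Set (List α)} {L : Set (List α)}
    {v : ℕ} (hv : ∀ᶠ n in atTop, sInf (ladnerCandidates Lang L n) = v) : Lang v = L := by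
  ext z
  have hloglog : Tendsto (fun n => Nat.log 2 (Nat.log 2 n)) atTop atTop :=
    (Nat.tendsto_log_atTop one_lt_two).comp (Nat.tendsto_log_atTop one_lt_two)
  obtain ⟨n, ⟨hn, hvlt⟩, hlen⟩ := ((hv.and (hloglog.eventually_gt_atTop v)).and
    ((Nat.tendsto_log_atTop one_lt_two).eventually_ge_atTop z.length)).exists
  have hmem : v ∈ ladnerCandidates Lang L n := hn ▸ Nat.sInf_mem ⟨_, Or.inr rfl⟩
  rcases hmem with ⟨-, hagree⟩ | hdefault
  · exact hagree z hlen
  · exact absurd (Set.mem_singleton_iff.1 hdefault) hvlt.ne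

end Ladner

/-- Let `M_H` be the machine of the Ladner-style construction, `RF = RF(M_H)` its run
fitting problem, and `Lang i = L(M_i)` the languages of a polynomial-time enumeration
`(M_i)` of clocked deterministic polynomial-time Turing machines (so each `Lang i` is in
PTime, and every PTime language occurs as `Lang i` for infinitely many `i`).  Let
`H : ℕ → ℕ` be the monotone function with `H n` the least `i < log log n` such that `M_i`
agrees with `RF(M_H)` on all strings of length at most `log n`, and `H n = log log n` if no
such `i` exists.  Then: if `RF(M_H)` is in PTime, `H` is bounded (`H(n) = O(1)`); and if
`RF(M_H)` is not in PTime, then `H(n) → ∞` as `n → ∞`. -/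
theorem stmt4 (MH : NTM) (Lang : ℕ → Set (List (Option MH.Sym ⊕ Unit))) (H : ℕ → ℕ)
    (hMono : Monotone H)
    (hLangP : ∀ i, InP (Lang i))
    (hEnum : ∀ L : Set (List (Option MH.Sym ⊕ Unit)), InP L → {i | Lang i = L}.Infinite)
    (hH : ∀ n, H n = sInf ({i | i < Nat.log 2 (Nat.log 2 n) ∧
        ∀ z : List (Option MH.Sym ⊕ Unit), z.length ≤ Nat.log 2 n →
          (z ∈ Lang i ↔ z ∈ MH.RFLang)} ∪ {Nat.log 2 (Nat.log 2 n)})) :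
    (InP MH.RFLang → ∃ C, ∀ n, H n ≤ C) ∧
    (¬ InP MH.RFLang → Filter.Tendsto H Filter.atTop Filter.atTop) := by
  constructor
  · intro hIn
    obtain ⟨i, hi⟩ := (hEnum _ hIn).nonempty
    exact ⟨i, fun n => hH n ▸ sInf_ladnerCandidates_le hi n⟩
  · intro hNotIn
    by_contra hNotTendsto
    obtain ⟨v, hv⟩ := hMono.exists_eventually_eq_of_not_tendsto_atTop hNotTendsto
    have hLangv : Lang v = MH.RFLang :=
      eq_of_eventually_sInf_ladnerCandidates_eq (hv.mono fun n hn => (hH n).symm.trans hn)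
    exact hNotIn (hLangv ▸ hLangP v)
end

section
/- In the uGF-unravelling D^u of an instance D, if t and t' are nodes of the unravelling tree with tail(t) = tail(t'), then there exists an automorphism ĥ of D^u that maps bag(t) onto bag(t') via the canonical isomorphism and satisfies ĥ(a)↑ = a↑ for every element a of D^u. -/
/-- A relational signature. -/
structure Sig where
  Rel : Type
  ar : Rel → ℕ

/-- A relational atom (fact) over the signature `σ` with arguments in `V`. -/
abbrev Atm (σ : Sig) (V : Type) : Type := (R : σ.Rel) × (Fin (σ.ar R) → V)

/-- An interpretation (or instance): a set of facts. -/
abbrev Interp (σ : Sig) (V : Type) : Type := Set (Atm σ V)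

/-- The domain of an interpretation: the elements occurring in some fact. -/
def Interp.dom {σ : Sig} {V : Type} (A : Interp σ V) : Set V :=
  { v | ∃ f ∈ A, ∃ i, f.2 i = v }

/-- `h` is a homomorphism from `A` to `B`. -/
def IsHom {σ : Sig} {V W : Type} (A : Interp σ V) (B : Interp σ W) (h : V → W) : Prop :=
  ∀ f ∈ A, (⟨f.1, h ∘ f.2⟩ : Atm σ W) ∈ B

/-- An ontology, given semantically as the class of its models. -/
def Ont (σ : Sig) : Type 1 := ∀ W : Type, Interp σ W → Prop

/-- `(W, ι, B)` is a model of the ontology `O` and the instance `D` (with standard names: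
`ι` injective, and every fact of `D` holds in `B`). -/
def IsMod {σ : Sig} (O : Ont σ) {V W : Type} (D : Interp σ V) (ι : V → W)
    (B : Interp σ W) : Prop :=
  Function.Injective ι ∧ IsHom D B ι ∧ O W B

/-- A conjunctive query of arity `k`, given by its finite canonical database together with
the tuple of answer variables. -/
structure CQ (σ : Sig) (k : ℕ) where
  V : Type
  finV : Finite V
  facts : Interp σ V
  finFacts : facts.Finite
  ans : Fin k → V

/-- `t` is an answer to the CQ `q` in `B`. -/
def CQAns {σ : Sig} {k : ℕ} {W : Type} (B : Interp σ W) (q : CQ σ k)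
    (t : Fin k → W) : Prop :=
  ∃ h : q.V → W, IsHom q.facts B h ∧ h ∘ q.ans = t

/-- A union of conjunctive queries. -/
abbrev UCQ (σ : Sig) (k : ℕ) := List (CQ σ k)

/-- `t` is an answer to the UCQ `qs` in `B`. -/
def UCQAns {σ : Sig} {k : ℕ} {W : Type} (B : Interp σ W) (qs : UCQ σ k)
    (t : Fin k → W) : Prop :=
  ∃ q ∈ qs, CQAns B q t

/-- `a` is a certain answer to the CQ `q` on `D` given `O`. -/
def CertainCQ {σ : Sig} (O : Ont σ) {V : Type} {k : ℕ} (D : Interp σ V) (q : CQ σ k)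
    (a : Fin k → V) : Prop :=
  ∀ (W : Type) (ι : V → W) (B : Interp σ W), IsMod O D ι B → CQAns B q (ι ∘ a)

/-- `a` is a certain answer to the UCQ `qs` on `D` given `O`. -/
def CertainUCQ {σ : Sig} (O : Ont σ) {V : Type} {k : ℕ} (D : Interp σ V) (qs : UCQ σ k)
    (a : Fin k → V) : Prop :=
  ∀ (W : Type) (ι : V → W) (B : Interp σ W), IsMod O D ι B → UCQAns B qs (ι ∘ a)

/-- `D` is consistent w.r.t. `O`. -/
def Consistent {σ : Sig} (O : Ont σ) {V : Type} (D : Interp σ V) : Prop :=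
  ∃ (W : Type) (ι : V → W) (B : Interp σ W), IsMod O D ι B

/-- `(W, ι, B)` is a materialization of `O` and `D`: a model in which, for every union of
conjunctive queries and every tuple over the domain of `D`, the answers are exactly the
certain answers. -/
def IsMat {σ : Sig} (O : Ont σ) {V W : Type} (D : Interp σ V) (ι : V → W)
    (B : Interp σ W) : Prop :=
  IsMod O D ι B ∧ ∀ (k : ℕ) (qs : UCQ σ k) (a : Fin k → V), (∀ i, a i ∈ D.dom) →
    (UCQAns B qs (ι ∘ a) ↔ CertainUCQ O D qs a)
/-- A set `G` is guarded in `A` if it is a singleton of the domain or the set of arguments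
of some atom of `A`. -/
def IsGuarded {σ : Sig} {V : Type} (A : Interp σ V) (G : Set V) : Prop :=
  (∃ v ∈ A.dom, G = {v}) ∨ ∃ f ∈ A, G = Set.range f.2

/-- A maximal guarded set of `A`. -/
def IsMaxGuarded {σ : Sig} {V : Type} (A : Interp σ V) (G : Set V) : Prop :=
  IsGuarded A G ∧ ∀ G', IsGuarded A G' → G ⊆ G' → G = G'

/-- A node of the unravelling tree `T(D)`: a nonempty sequence `G_0 G_1 ⋯ G_n` of maximal
guarded sets of `D` with `G_i ≠ G_{i+1}`, `G_i ∩ G_{i+1} ≠ ∅` and `G_{i-1} ≠ G_{i+1}`.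
(The sequence is represented by the list whose head is `G_n = tail(t)`.) -/
def IsPath {σ : Sig} {V : Type} (D : Interp σ V) (l : List (Set V)) : Prop :=
  l ≠ [] ∧ (∀ G ∈ l, IsMaxGuarded D G) ∧
    l.Chain' (fun G G' => G ≠ G' ∧ (G ∩ G').Nonempty) ∧
    ∀ (i : ℕ) (h : i + 2 < l.length), l.get ⟨i, by omega⟩ ≠ l.get ⟨i + 2, h⟩

open Classical

/-- The birth node of (the copy in `bag(t)` of) the element `d`: the earliest node on the
path at which the copy of `d` occurring in `bag(t)` was introduced. -/
noncomputable def birth {V : Type} (l : List (Set V)) (d : V) : List (Set V) :=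
  match l with
  | [] => []
  | [G] => [G]
  | G :: G' :: rest =>
      if d ∈ G' then birth (G' :: rest) d else G :: G' :: rest

/-- The uGF-unravelling `D^u` of `D`: its elements are pairs `(t₀, d)` where `t₀` is the
birth node of a copy of `d ∈ dom(D)`, and for every node `t` and every atom of `D` whose
arguments all lie in `tail(t)`, `D^u` contains the corresponding atom on the copies in
`bag(t)`. -/
def Unrav {σ : Sig} {V : Type} (D : Interp σ V) : Interp σ (List (Set V) × V) :=
  { f | ∃ (t : List (Set V)) (R : σ.Rel) (args : Fin (σ.ar R) → V),
      IsPath D t ∧ (⟨R, args⟩ : Atm σ V) ∈ D ∧ (∀ i, args i ∈ t.headI) ∧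
      f = ⟨R, fun i => (birth t (args i), args i)⟩ }

/-! A node of the unravelling tree is determined by the walk of labels leading to it, and every
node labelled `G` has exactly one neighbour labelled `H` for each maximal guarded set `H ≠ G`
meeting `G` (its parent or a child). So following from `t'` the walk that leads from `t` to a node
defines a label-preserving isomorphism from the component of `t` onto that of `t'`, taking `t` to
`t'`. It commutes with steps to neighbours, hence with birth nodes, so it lifts to an automorphism
of `D^u` fixing every `a↑`, which on `bag(t)` is the canonical isomorphism onto `bag(t')`. -/

section Tree

variable {σ : Sig} {V : Type} {D : Interp σ V}

def Adj (D : Interp σ V) (G H : Set V) : Prop :=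
  IsMaxGuarded D H ∧ G ≠ H ∧ (G ∩ H).Nonempty

theorem isPath_cons_cons {H G : Set V} {r : List (Set V)} :
    IsPath D (H :: G :: r) ↔ Adj D G H ∧ r.head? ≠ some H ∧ IsPath D (G :: r) := by
  have hsep : (∀ (i : ℕ) (h : i + 2 < (H :: G :: r).length),
        (H :: G :: r).get ⟨i, by omega⟩ ≠ (H :: G :: r).get ⟨i + 2, h⟩) ↔
      r.head? ≠ some H ∧ ∀ (i : ℕ) (h : i + 2 < (G :: r).length),
        (G :: r).get ⟨i, by omega⟩ ≠ (G :: r).get ⟨i + 2, h⟩ := by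
    constructor
    · intro h
      refine ⟨?_, fun i hi => h (i + 1) (by simpa using hi)⟩
      cases r with
      | nil => simp
      | cons K r => simpa [eq_comm] using h 0 (by simp)
    · rintro ⟨h0, h⟩ (_ | i) hi
      · cases r with
        | nil => simp at hi
        | cons K r => simpa [eq_comm] using h0
      · exact h i (by simpa using hi)
  have hchain := List.isChain_cons_cons (R := fun G G' => G ≠ G' ∧ (G ∩ G').Nonempty)
    (a := H) (b := G) (l := r)
  rw [IsPath, IsPath, hsep]
  simp only [Adj, List.mem_cons, forall_eq_or_imp, ne_eq, reduceCtorEq, not_false_eq_true,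
    true_and, Set.inter_comm G H] at hchain ⊢
  tauto

theorem IsPath.ne_nil {l : List (Set V)} (h : IsPath D l) : l ≠ [] := h.1

theorem IsPath.of_cons {H : Set V} {l : List (Set V)} (h : IsPath D (H :: l)) (hl : l ≠ []) :
    IsPath D l := by
  obtain ⟨G, r, rfl⟩ := List.exists_cons_of_ne_nil hl
  exact (isPath_cons_cons.1 h).2.2

theorem IsPath.isChain_adj {l : List (Set V)} (h : IsPath D l) : l.IsChain (Adj D) := by
  induction l with
  | nil => exact List.IsChain.nil
  | cons H l ih =>
    match l, h with
    | [], _ => exact List.isChain_singleton _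
    | G :: r, h =>
      obtain ⟨⟨-, hne, hint⟩, -, hGr⟩ := isPath_cons_cons.1 h
      have hG : IsMaxGuarded D G := hGr.2.1 G List.mem_cons_self
      exact List.isChain_cons_cons.2 ⟨⟨hG, hne.symm, Set.inter_comm G H ▸ hint⟩, ih hGr⟩

/-- One step in the unravelling tree, to the neighbour labelled `H`: the parent if it is
labelled `H`, otherwise the child `H :: l`. -/
noncomputable def move : List (Set V) → Set V → List (Set V)
  | G :: K :: r, H => if K = H then K :: r else H :: G :: K :: r
  | l, H => H :: l

/-- The node reached from `l` by following the walk whose successive labels are `w`. -/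
noncomputable def replay (l w : List (Set V)) : List (Set V) := w.foldl move l

theorem move_pop (G H : Set V) (r : List (Set V)) : move (G :: H :: r) H = H :: r := if_pos rfl

theorem move_of_head?_ne {G H : Set V} {r : List (Set V)} (h : r.head? ≠ some H) :
    move (G :: r) H = H :: G :: r := by
  match r with
  | [] => rfl
  | K :: r => exact if_neg fun hK => h (by rw [hK]; rfl)

theorem IsPath.move_tail {H : Set V} {l : List (Set V)} (h : IsPath D (H :: l)) (hl : l ≠ []) :
    move l H = H :: l := by
  obtain ⟨G, r, rfl⟩ := List.exists_cons_of_ne_nil hl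
  exact move_of_head?_ne (isPath_cons_cons.1 h).2.1

theorem headI_move (l : List (Set V)) (H : Set V) : (move l H).headI = H := by
  match l with
  | [] | [_] => rfl
  | G :: K :: r => by_cases hK : K = H <;> simp [move, hK]

theorem move_ne_nil (l : List (Set V)) (H : Set V) : move l H ≠ [] := by
  match l with
  | [] | [_] => simp [move]
  | G :: K :: r => by_cases hK : K = H <;> simp [move, hK]

theorem getLast?_move {l : List (Set V)} (hl : l ≠ []) (H : Set V) :
    (move l H).getLast? = l.getLast? := by
  match l with
  | [_] => rfl
  | G :: K :: r => by_cases hK : K = H <;> simp [move, hK, List.getLast?_cons_cons]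

theorem IsPath.move {H : Set V} {l : List (Set V)} (h : IsPath D l) (hH : Adj D l.headI H) :
    IsPath D (move l H) := by
  match l with
  | [G] => exact isPath_cons_cons.2 ⟨hH, by simp, h⟩
  | G :: K :: r =>
    by_cases hK : K = H
    · subst hK
      rw [move_pop]
      exact h.of_cons (by simp)
    · rw [move_of_head?_ne (by simpa using hK)]
      exact isPath_cons_cons.2 ⟨hH, by simpa using hK, h⟩

theorem move_move {H : Set V} {l : List (Set V)} (h : IsPath D l) (hH : l.headI ≠ H) :
    move (move l H) l.headI = l := by
  obtain ⟨G, l, rfl⟩ := List.exists_cons_of_ne_nil h.ne_nil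
  change G ≠ H at hH
  show move (move (G :: l) H) G = G :: l
  match l with
  | [] => exact move_pop H G []
  | K :: r =>
    by_cases hK : K = H
    · subst hK
      rw [move_pop, h.move_tail (by simp)]
    · rw [move_of_head?_ne (by simpa using hK), move_pop]

theorem replay_cons (l : List (Set V)) (H : Set V) (w : List (Set V)) :
    replay l (H :: w) = replay (move l H) w := rfl

theorem replay_append (l u w : List (Set V)) : replay l (u ++ w) = replay (replay l u) w :=
  List.foldl_append

theorem headI_replay (l w : List (Set V)) : (replay l w).headI = w.getLastD l.headI := by
  induction w generalizing l with
  | nil => rfl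
  | cons H w ih => rw [replay_cons, ih, headI_move, List.getLastD_cons]

theorem getLast?_replay {l : List (Set V)} (hl : l ≠ []) (w : List (Set V)) :
    (replay l w).getLast? = l.getLast? := by
  induction w generalizing l with
  | nil => rfl
  | cons H w ih =>
    rw [replay_cons, ih (move_ne_nil l H), getLast?_move hl]

theorem IsPath.replay {l w : List (Set V)} (h : IsPath D l)
    (hw : (l.headI :: w).IsChain (Adj D)) : IsPath D (replay l w) := by
  induction w generalizing l with
  | nil => exact h
  | cons H w ih =>
    rw [List.isChain_cons_cons] at hw
    exact ih (h.move hw.1) (by rw [headI_move]; exact hw.2)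

theorem replay_tail (l : List (Set V)) (G : Set V) : replay (G :: l) l = [l.getLastD G] := by
  induction l generalizing G with
  | nil => rfl
  | cons H l ih => rw [replay_cons, move_pop, ih, List.getLastD_cons]

theorem replay_backtrack {l w : List (Set V)} (h : IsPath D l)
    (hw : (l.headI :: w).IsChain (Adj D)) :
    replay l (w ++ (l.headI :: w).dropLast.reverse) = l := by
  induction w generalizing l with
  | nil => rfl
  | cons H w ih =>
    rw [List.isChain_cons_cons] at hw
    obtain ⟨G, r, rfl⟩ := List.exists_cons_of_ne_nil h.ne_nil
    have hback := ih (h.move hw.1) (by rw [headI_move]; exact hw.2)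
    rw [headI_move] at hback
    rw [List.dropLast_cons_of_ne_nil (by simp), List.reverse_cons, List.cons_append,
      ← List.append_assoc, replay_cons, replay_append, hback]
    exact move_move h hw.1.2.1

/-- The image of `s` under the isomorphism of unravelling trees that takes `t` to `t'`: follow
from `t'` the labels of the walk from `t` down to the root and back up to `s`. -/
noncomputable def transfer (t t' s : List (Set V)) : List (Set V) :=
  replay t' (t.tail ++ s.dropLast.reverse)

theorem transfer_cons (t t' : List (Set V)) (x : Set V) {s : List (Set V)} (hs : s ≠ []) :
    transfer t t' (x :: s) = move (transfer t t' s) x := by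
  rw [transfer, transfer, List.dropLast_cons_of_ne_nil hs, List.reverse_cons,
    ← List.append_assoc, replay_append]
  rfl

theorem transfer_singleton (t t' : List (Set V)) (x : Set V) :
    transfer t t' [x] = replay t' t.tail := by
  simp [transfer]

theorem getLast?_transfer (t : List (Set V)) {t' : List (Set V)} (ht' : t' ≠ [])
    (s : List (Set V)) : (transfer t t' s).getLast? = t'.getLast? :=
  getLast?_replay ht' _

theorem headI_transfer {t t' s : List (Set V)} (hh : t.headI = t'.headI) (hs : s ≠ [])
    (hr : s.getLast? = t.getLast?) : (transfer t t' s).headI = s.headI := by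
  match s with
  | [x] =>
    cases t with
    | nil => simp at hr
    | cons G l =>
    simpa [transfer_singleton, headI_replay, ← hh, List.getLastD_eq_getLast?,
      List.getLast?_cons] using hr.symm
  | x :: y :: r => rw [transfer_cons _ _ _ (List.cons_ne_nil y r), headI_move]; rfl

theorem isPath_transfer {t t' s : List (Set V)} (ht : IsPath D t) (ht' : IsPath D t')
    (hh : t.headI = t'.headI) (hs : IsPath D s) (hr : s.getLast? = t.getLast?) :
    IsPath D (transfer t t' s) := by
  induction s with
  | nil => exact absurd rfl hs.ne_nil
  | cons x s ih =>
    match s with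
    | [] =>
      obtain ⟨G, l, rfl⟩ := List.exists_cons_of_ne_nil ht.ne_nil
      rw [transfer_singleton]
      exact ht'.replay (hh ▸ ht.isChain_adj)
    | y :: r =>
      obtain ⟨hyx, -, hyr⟩ := isPath_cons_cons.1 hs
      have hyr_root : (y :: r).getLast? = t.getLast? := by
        simpa [List.getLast?_cons_cons] using hr
      rw [transfer_cons _ _ _ (List.cons_ne_nil y r)]
      exact (ih hyr hyr_root).move (by rwa [headI_transfer hh hyr.ne_nil hyr_root])

theorem transfer_move {t t' s : List (Set V)} {H : Set V} (ht : IsPath D t)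
    (ht' : IsPath D t') (hh : t.headI = t'.headI) (hs : IsPath D s)
    (hr : s.getLast? = t.getLast?) (hH : Adj D s.headI H) :
    transfer t t' (move s H) = move (transfer t t' s) H := by
  match s with
  | [x] => exact transfer_cons t t' H (List.cons_ne_nil x [])
  | x :: K :: r =>
    by_cases hK : K = H
    · subst hK
      have hKr := hs.of_cons (List.cons_ne_nil K r)
      have hKr_root : (K :: r).getLast? = t.getLast? := by
        simpa [List.getLast?_cons_cons] using hr
      have hpath := isPath_transfer ht ht' hh hKr hKr_root
      have hhead := headI_transfer (t' := t') hh hKr.ne_nil hKr_root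
      rw [move_pop, transfer_cons _ _ _ (List.cons_ne_nil K r)]
      have hback := move_move hpath (H := x) (by rw [hhead]; exact hH.2.1.symm)
      rw [hhead] at hback
      exact hback.symm
    · rw [move_of_head?_ne (by simpa using hK)]
      exact transfer_cons t t' H (List.cons_ne_nil x _)

theorem transfer_replay {t t' s w : List (Set V)} (ht : IsPath D t) (ht' : IsPath D t')
    (hh : t.headI = t'.headI) (hs : IsPath D s) (hr : s.getLast? = t.getLast?)
    (hw : (s.headI :: w).IsChain (Adj D)) :
    transfer t t' (replay s w) = replay (transfer t t' s) w := by
  induction w generalizing s with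
  | nil => rfl
  | cons H w ih =>
    rw [List.isChain_cons_cons] at hw
    rw [replay_cons, replay_cons, ← transfer_move ht ht' hh hs hr hw.1]
    exact ih (hs.move hw.1) ((getLast?_move hs.ne_nil H).trans hr)
      (by rw [headI_move]; exact hw.2)

theorem transfer_self {t t' : List (Set V)} (ht : IsPath D t) (ht' : IsPath D t')
    (hh : t.headI = t'.headI) : transfer t t' t = t' := by
  obtain ⟨G, l, rfl⟩ := List.exists_cons_of_ne_nil ht.ne_nil
  have hback := replay_backtrack ht' (w := l) (hh ▸ ht.isChain_adj)
  rwa [← hh] at hback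

theorem transfer_transfer {t t' s : List (Set V)} (ht : IsPath D t) (ht' : IsPath D t')
    (hh : t.headI = t'.headI) (hs : IsPath D s) (hr : s.getLast? = t.getLast?) :
    transfer t' t (transfer t t' s) = s := by
  induction s with
  | nil => exact absurd rfl hs.ne_nil
  | cons x s ih =>
    match s with
    | [] =>
      obtain ⟨G, l, rfl⟩ := List.exists_cons_of_ne_nil ht.ne_nil
      rw [transfer_singleton, transfer_replay ht' ht hh.symm ht' rfl (hh ▸ ht.isChain_adj),
        transfer_self ht' ht hh.symm]
      simpa [replay_tail, List.getLastD_eq_getLast?, List.getLast?_cons] using hr.symm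
    | y :: r =>
      obtain ⟨hyx, -, hyr⟩ := isPath_cons_cons.1 hs
      have hyr_root : (y :: r).getLast? = t.getLast? := by
        simpa [List.getLast?_cons_cons] using hr
      have hpath := isPath_transfer ht ht' hh hyr hyr_root
      have hhead := headI_transfer (t' := t') hh hyr.ne_nil hyr_root
      rw [transfer_cons _ _ _ (List.cons_ne_nil y r),
        transfer_move ht' ht hh.symm hpath (getLast?_transfer t ht'.ne_nil _)
          (by rwa [hhead]), ih hyr hyr_root, hs.move_tail (List.cons_ne_nil y r)]

theorem birth_cons_cons (G K : Set V) (r : List (Set V)) (d : V) :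
    birth (G :: K :: r) d = if d ∈ K then birth (K :: r) d else G :: K :: r := rfl

theorem IsPath.birth {l : List (Set V)} (h : IsPath D l) (d : V) : IsPath D (birth l d) := by
  induction l with
  | nil => exact h
  | cons G l ih =>
    match l with
    | [] => exact h
    | K :: r =>
      rw [birth_cons_cons]
      split_ifs
      · exact ih (h.of_cons (List.cons_ne_nil K r))
      · exact h

theorem mem_headI_birth {l : List (Set V)} {d : V} (h : d ∈ l.headI) :
    d ∈ (birth l d).headI := by
  induction l with
  | nil => exact h
  | cons G l ih =>
    match l with
    | [] => exact h
    | K :: r =>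
      rw [birth_cons_cons]
      split_ifs with hK
      · exact ih hK
      · exact h

theorem birth_birth (l : List (Set V)) (d : V) : birth (birth l d) d = birth l d := by
  induction l with
  | nil => rfl
  | cons G l ih =>
    match l with
    | [] => rfl
    | K :: r =>
      rw [birth_cons_cons]
      split_ifs with hK
      · exact ih
      · rw [birth_cons_cons, if_neg hK]

theorem birth_move {l : List (Set V)} {x : Set V} {d : V} (hdx : d ∈ x) (hdl : d ∈ l.headI) :
    birth (move l x) d = birth l d := by
  match l with
  | [G] => exact if_pos hdl
  | G :: K :: r =>
    by_cases hK : K = x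
    · subst hK
      rw [move_pop, birth_cons_cons, if_pos hdx]
    · rw [move_of_head?_ne (by simpa using hK), birth_cons_cons, if_pos (show d ∈ G from hdl)]

variable (D) in
/-- A label-preserving map of the unravelling forest that sends each child `x :: s` to the
neighbour labelled `x` of the image of its parent `s`. -/
structure IsTreeHom (Φ : List (Set V) → List (Set V)) : Prop where
  isPath : ∀ s, IsPath D s → IsPath D (Φ s)
  headI : ∀ s, IsPath D s → (Φ s).headI = s.headI
  cons : ∀ x s, IsPath D (x :: s) → s ≠ [] → Φ (x :: s) = move (Φ s) x

theorem IsTreeHom.birth_map_birth {Φ : List (Set V) → List (Set V)} (hΦ : IsTreeHom D Φ)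
    {s : List (Set V)} (hs : IsPath D s) {d : V} (hd : d ∈ s.headI) :
    birth (Φ (birth s d)) d = birth (Φ s) d := by
  induction s with
  | nil => rfl
  | cons x s ih =>
    match s with
    | [] => rfl
    | y :: r =>
      have hyr := hs.of_cons (List.cons_ne_nil y r)
      rw [birth_cons_cons]
      split_ifs with hy
      · rw [ih hyr hy, hΦ.cons x _ hs (List.cons_ne_nil y r),
          birth_move (show d ∈ x from hd) (by rwa [hΦ.headI _ hyr])]
      · rfl

variable (D) in
/-- `(b, d)` is an element of `D^u`: `b` is the birth node of the copy of `d` in its bag. -/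
def IsBorn (x : List (Set V) × V) : Prop :=
  IsPath D x.1 ∧ x.2 ∈ x.1.headI ∧ birth x.1 x.2 = x.1

theorem isBorn_birth {s : List (Set V)} (hs : IsPath D s) {d : V} (hd : d ∈ s.headI) :
    IsBorn D (birth s d, d) :=
  ⟨hs.birth d, mem_headI_birth hd, birth_birth s d⟩

variable (D) in
noncomputable def liftHom (Φ : List (Set V) → List (Set V)) (x : List (Set V) × V) :
    List (Set V) × V :=
  if IsBorn D x then (birth (Φ x.1) x.2, x.2) else x

theorem snd_liftHom (Φ : List (Set V) → List (Set V)) (x : List (Set V) × V) :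
    (liftHom D Φ x).2 = x.2 := by
  unfold liftHom
  split_ifs <;> rfl

theorem IsTreeHom.liftHom_birth {Φ : List (Set V) → List (Set V)} (hΦ : IsTreeHom D Φ)
    {s : List (Set V)} (hs : IsPath D s) {d : V} (hd : d ∈ s.headI) :
    liftHom D Φ (birth s d, d) = (birth (Φ s) d, d) := by
  rw [liftHom, if_pos (isBorn_birth hs hd), hΦ.birth_map_birth hs hd]

theorem IsTreeHom.liftHom_liftHom {Φ Ψ : List (Set V) → List (Set V)} (hΦ : IsTreeHom D Φ)
    (hΨ : IsTreeHom D Ψ) (hΨΦ : ∀ s, IsPath D s → Ψ (Φ s) = s) (x : List (Set V) × V) :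
    liftHom D Ψ (liftHom D Φ x) = x := by
  by_cases hx : IsBorn D x
  · obtain ⟨b, d⟩ := x
    obtain ⟨hb, hd, hbirth⟩ := hx
    have hΦb : liftHom D Φ (b, d) = (birth (Φ b) d, d) := if_pos ⟨hb, hd, hbirth⟩
    rw [hΦb, hΨ.liftHom_birth (hΦ.isPath b hb) (by rwa [hΦ.headI b hb]), hΨΦ b hb, hbirth]
  · have hΦx : liftHom D Φ x = x := if_neg hx
    have hΨx : liftHom D Ψ x = x := if_neg hx
    rw [hΦx, hΨx]

theorem IsTreeHom.liftHom_mem_unrav {Φ : List (Set V) → List (Set V)} (hΦ : IsTreeHom D Φ)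
    {f : Atm σ (List (Set V) × V)} (hf : f ∈ Unrav D) :
    (⟨f.1, fun i => liftHom D Φ (f.2 i)⟩ : Atm σ (List (Set V) × V)) ∈ Unrav D := by
  obtain ⟨s, R, args, hs, hD, hargs, rfl⟩ := hf
  refine ⟨Φ s, R, args, hΦ.isPath s hs, hD, fun i => (hΦ.headI s hs).symm ▸ hargs i, ?_⟩
  simp only [hΦ.liftHom_birth hs (hargs _)]

theorem IsTreeHom.bijOn_liftHom {Φ Ψ : List (Set V) → List (Set V)} (hΦ : IsTreeHom D Φ)
    (hΨ : IsTreeHom D Ψ) (hΨΦ : ∀ s, IsPath D s → Ψ (Φ s) = s)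
    (hΦΨ : ∀ s, IsPath D s → Φ (Ψ s) = s) :
    Set.BijOn (liftHom D Φ) (Unrav D).dom (Unrav D).dom := by
  have mapsTo {Φ : List (Set V) → List (Set V)} (hΦ : IsTreeHom D Φ) :
      Set.MapsTo (liftHom D Φ) (Unrav D).dom (Unrav D).dom := by
    rintro _ ⟨f, hf, i, rfl⟩
    exact ⟨_, hΦ.liftHom_mem_unrav hf, i, rfl⟩
  exact Set.InvOn.bijOn ⟨fun x _ => hΦ.liftHom_liftHom hΨ hΨΦ x,
    fun x _ => hΨ.liftHom_liftHom hΦ hΦΨ x⟩ (mapsTo hΦ) (mapsTo hΨ)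

theorem IsTreeHom.mem_unrav_iff_liftHom {Φ Ψ : List (Set V) → List (Set V)}
    (hΦ : IsTreeHom D Φ) (hΨ : IsTreeHom D Ψ) (hΨΦ : ∀ s, IsPath D s → Ψ (Φ s) = s)
    (f : Atm σ (List (Set V) × V)) :
    f ∈ Unrav D ↔
      (⟨f.1, fun i => liftHom D Φ (f.2 i)⟩ : Atm σ (List (Set V) × V)) ∈ Unrav D := by
  refine ⟨hΦ.liftHom_mem_unrav, fun h => ?_⟩
  simpa only [hΦ.liftHom_liftHom hΨ hΨΦ] using hΨ.liftHom_mem_unrav h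

/-- Defined on the whole forest so that `forestIso t' t` inverts it, whether or not `t` and `t'`
have the same root. -/
noncomputable def forestIso (t t' s : List (Set V)) : List (Set V) :=
  if s.getLast? = t.getLast? then transfer t t' s
  else if s.getLast? = t'.getLast? then transfer t' t s
  else s

theorem isTreeHom_forestIso {t t' : List (Set V)} (ht : IsPath D t) (ht' : IsPath D t')
    (hh : t.headI = t'.headI) : IsTreeHom D (forestIso t t') where
  isPath s hs := by
    unfold forestIso
    split_ifs with h₁ h₂
    · exact isPath_transfer ht ht' hh hs h₁
    · exact isPath_transfer ht' ht hh.symm hs h₂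
    · exact hs
  headI s hs := by
    unfold forestIso
    split_ifs with h₁ h₂
    · exact headI_transfer hh hs.ne_nil h₁
    · exact headI_transfer hh.symm hs.ne_nil h₂
    · rfl
  cons x s hxs hs := by
    simp only [forestIso, List.getLast?_cons_of_ne_nil hs]
    split_ifs
    · exact transfer_cons t t' x hs
    · exact transfer_cons t' t x hs
    · exact (hxs.move_tail hs).symm

theorem forestIso_forestIso {t t' s : List (Set V)} (ht : IsPath D t) (ht' : IsPath D t')
    (hh : t.headI = t'.headI) (hs : IsPath D s) : forestIso t' t (forestIso t t' s) = s := by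
  by_cases h₁ : s.getLast? = t.getLast?
  · have hs' : forestIso t t' s = transfer t t' s := if_pos h₁
    rw [hs', forestIso, if_pos (getLast?_transfer t ht'.ne_nil s)]
    exact transfer_transfer ht ht' hh hs h₁
  by_cases h₂ : s.getLast? = t'.getLast?
  · have hne : (transfer t' t s).getLast? ≠ t'.getLast? := by
      rw [getLast?_transfer t' ht.ne_nil s, ← h₂]
      exact Ne.symm h₁
    have hs' : forestIso t t' s = transfer t' t s := by rw [forestIso, if_neg h₁, if_pos h₂]
    rw [hs', forestIso, if_neg hne,
      if_pos (getLast?_transfer t' ht.ne_nil s)]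
    exact transfer_transfer ht' ht hh.symm hs h₂
  · have hs' : forestIso t t' s = s := by rw [forestIso, if_neg h₁, if_neg h₂]
    rw [hs', forestIso, if_neg h₂, if_neg h₁]

theorem forestIso_self {t t' : List (Set V)} (ht : IsPath D t) (ht' : IsPath D t')
    (hh : t.headI = t'.headI) : forestIso t t' t = t' := by
  rw [forestIso, if_pos rfl, transfer_self ht ht' hh]

end Tree

theorem stmt6_general {σ : Sig} {V : Type} (D : Interp σ V)
    (t t' : List (Set V)) (ht : IsPath D t) (ht' : IsPath D t')
    (htail : t.headI = t'.headI) :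
    ∃ g : List (Set V) × V → List (Set V) × V,
      Set.BijOn g (Unrav D).dom (Unrav D).dom ∧
      (∀ f : Atm σ (List (Set V) × V),
        f ∈ Unrav D ↔ (⟨f.1, fun i => g (f.2 i)⟩ : Atm σ (List (Set V) × V)) ∈ Unrav D) ∧
      (∀ x ∈ (Unrav D).dom, (g x).2 = x.2) ∧
      (∀ d ∈ t.headI, g (birth t d, d) = (birth t' d, d)) := by
  have hΦ := isTreeHom_forestIso ht ht' htail
  have hΨ := isTreeHom_forestIso ht' ht htail.symm
  have hΨΦ := fun s => forestIso_forestIso (s := s) ht ht' htail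
  have hΦΨ := fun s => forestIso_forestIso (s := s) ht' ht htail.symm
  refine ⟨liftHom D (forestIso t t'), hΦ.bijOn_liftHom hΨ hΨΦ hΦΨ,
    hΦ.mem_unrav_iff_liftHom hΨ hΨΦ, fun x _ => snd_liftHom _ x, fun d hd => ?_⟩
  rw [hΦ.liftHom_birth ht hd, forestIso_self ht ht' htail]

/-- In the uGF-unravelling `D^u` of a (finite, nonempty) instance `D`, if `t` and `t'` are
nodes of the unravelling tree with `tail(t) = tail(t')`, then there is an automorphism `g`
of `D^u` (a bijection of its domain preserving atoms in both directions) that maps `bag(t)`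
onto `bag(t')` via the canonical isomorphism (sending the copy of `d` in `bag(t)` to the
copy of `d` in `bag(t')`) and satisfies `g(a)↑ = a↑` for every element `a` of `D^u`. -/
theorem stmt6 {σ : Sig} {V : Type} (D : Interp σ V) (hfin : D.Finite) (hne : D.Nonempty)
    (t t' : List (Set V)) (ht : IsPath D t) (ht' : IsPath D t')
    (htail : t.headI = t'.headI) :
    ∃ g : List (Set V) × V → List (Set V) × V,
      Set.BijOn g (Unrav D).dom (Unrav D).dom ∧
      (∀ f : Atm σ (List (Set V) × V),
        f ∈ Unrav D ↔ (⟨f.1, fun i => g (f.2 i)⟩ : Atm σ (List (Set V) × V)) ∈ Unrav D) ∧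
      (∀ x ∈ (Unrav D).dom, (g x).2 = x.2) ∧
      (∀ d ∈ t.headI, g (birth t d, d) = (birth t' d, d)) :=
  stmt6_general D t t' ht ht' htail
end

section
/- Let O be an ontology, D an instance, and D_O the O-saturation of D. Then there exists a materialization of O and D if and only if there exists a materialization of O and D_O. Moreover, if D is O-saturated and B is a materialization of O and D, then the subinterpretation of B induced by dom(D) equals D; and any induced subinstance of an O-saturated instance (on a subset X with D'|_X = D) is O-saturated. -/
/-- The fact `R(args)` is certain for `D` given `O`: it holds in every model. -/
def CertainFact {σ : Sig} (O : Ont σ) {V : Type} (D : Interp σ V) (R : σ.Rel)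
    (args : Fin (σ.ar R) → V) : Prop :=
  ∀ (W : Type) (ι : V → W) (B : Interp σ W), IsMod O D ι B →
    (⟨R, ι ∘ args⟩ : Atm σ W) ∈ B

/-- `D` is `O`-saturated: every certain fact over its domain already belongs to `D`. -/
def Saturated {σ : Sig} (O : Ont σ) {V : Type} (D : Interp σ V) : Prop :=
  ∀ (R : σ.Rel) (args : Fin (σ.ar R) → V), (∀ i, args i ∈ D.dom) →
    CertainFact O D R args → (⟨R, args⟩ : Atm σ V) ∈ D

/-- The `O`-saturation of `D`: `D` together with all certain facts over its domain
(the unique minimal `O`-saturated instance containing `D`). -/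
def Osat {σ : Sig} (O : Ont σ) {V : Type} (D : Interp σ V) : Interp σ V :=
  D ∪ { f | (∀ i, f.2 i ∈ D.dom) ∧ CertainFact O D f.1 f.2 }

theorem mod_iff_osat {σ : Sig} (O : Ont σ) {V W : Type} (D : Interp σ V) (ι : V → W)
    (B : Interp σ W) : IsMod O D ι B ↔ IsMod O (Osat O D) ι B := by
  constructor
  · rintro ⟨hinj, hhom, hO⟩
    refine ⟨hinj, ?_, hO⟩
    rintro f (hf | ⟨_, hcert⟩)
    · exact hhom f hf
    · exact hcert W ι B ⟨hinj, hhom, hO⟩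
  · rintro ⟨hinj, hhom, hO⟩
    exact ⟨hinj, fun f hf => hhom f (Or.inl hf), hO⟩

theorem dom_osat {σ : Sig} (O : Ont σ) {V : Type} (D : Interp σ V) :
    (Osat O D).dom = D.dom := by
  ext v
  constructor
  · rintro ⟨f, hf | ⟨hdom, _⟩, i, hi⟩
    · exact ⟨f, hf, i, hi⟩
    · exact hi ▸ hdom i
  · rintro ⟨f, hf, i, hi⟩
    exact ⟨f, Or.inl hf, i, hi⟩

theorem certain_iff_osat {σ : Sig} (O : Ont σ) {V : Type} {k : ℕ} (D : Interp σ V)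
    (qs : UCQ σ k) (a : Fin k → V) :
    CertainUCQ O D qs a ↔ CertainUCQ O (Osat O D) qs a := by
  constructor <;> intro h W ι B hm
  · exact h W ι B ((mod_iff_osat O D ι B).mpr hm)
  · exact h W ι B ((mod_iff_osat O D ι B).mp hm)

theorem mat_iff_osat {σ : Sig} (O : Ont σ) {V W : Type} (D : Interp σ V) (ι : V → W)
    (B : Interp σ W) : IsMat O D ι B ↔ IsMat O (Osat O D) ι B := by
  unfold IsMat
  rw [← mod_iff_osat]
  constructor <;> rintro ⟨hm, hq⟩ <;> refine ⟨hm, fun k qs a ha => ?_⟩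
  · rw [← certain_iff_osat]
    exact hq k qs a (fun i => (dom_osat O D) ▸ ha i)
  · rw [certain_iff_osat]
    exact hq k qs a (fun i => (dom_osat O D).symm ▸ ha i)

/-- Let `O` be an ontology, `D` an instance and `D_O` its `O`-saturation.  Then:
(1) there is a materialization of `O` and `D` iff there is one of `O` and `D_O`;
(2) if `D` is `O`-saturated and `B` is a materialization of `O` and `D`, then the
subinterpretation of `B` induced by `dom(D)` equals `D`;
(3) every induced subinstance of an `O`-saturated instance is `O`-saturated. -/
theorem stmt10 {σ : Sig} (O : Ont σ) {V : Type} (D : Interp σ V) :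
    ((∃ (W : Type) (ι : V → W) (B : Interp σ W), IsMat O D ι B) ↔
      (∃ (W : Type) (ι : V → W) (B : Interp σ W), IsMat O (Osat O D) ι B)) ∧
    (Saturated O D → ∀ (W : Type) (ι : V → W) (B : Interp σ W), IsMat O D ι B →
      ∀ (R : σ.Rel) (args : Fin (σ.ar R) → V), (∀ i, args i ∈ D.dom) →
        ((⟨R, ι ∘ args⟩ : Atm σ W) ∈ B ↔ (⟨R, args⟩ : Atm σ V) ∈ D)) ∧
    (∀ (D' : Interp σ V) (X : Set V), Saturated O D' →
      Saturated O { f ∈ D' | ∀ i, f.2 i ∈ X }) := by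
  refine ⟨?_, ?_, ?_⟩
  · constructor
    · rintro ⟨W, ι, B, h⟩; exact ⟨W, ι, B, (mat_iff_osat O D ι B).mp h⟩
    · rintro ⟨W, ι, B, h⟩; exact ⟨W, ι, B, (mat_iff_osat O D ι B).mpr h⟩
  · rintro hsat W ι B ⟨hmod, hq⟩ R args hdom
    constructor
    · intro hB
      apply hsat R args hdom
      set q : CQ σ (σ.ar R) :=
        ⟨Fin (σ.ar R), inferInstance, {⟨R, id⟩}, Set.finite_singleton _, id⟩ with hqdef
      have hcert : CertainUCQ O D [q] args := by
        rw [← hq (σ.ar R) [q] args hdom]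
        refine ⟨q, List.mem_singleton.mpr rfl, ι ∘ args, ?_, rfl⟩
        rintro f hf
        rcases hf with rfl
        exact hB
      intro W' ι' B' hm
      obtain ⟨q', hq', h, hhom, hans⟩ := hcert W' ι' B' hm
      rcases List.mem_singleton.mp hq' with rfl
      have hmem := hhom ⟨R, id⟩ rfl
      have : h ∘ id = ι' ∘ args := hans
      rwa [this] at hmem
    · intro hD
      exact hmod.2.1 ⟨R, args⟩ hD
  · rintro D' X hsat R args hdom hcert
    have hsub : Interp.dom {f ∈ D' | ∀ i, f.2 i ∈ X} ⊆ D'.dom ∩ X := by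
      rintro v ⟨f, ⟨hf, hx⟩, i, hi⟩
      exact ⟨⟨f, hf, i, hi⟩, hi ▸ hx i⟩
    refine ⟨hsat R args (fun i => (hsub (hdom i)).1) ?_, fun i => (hsub (hdom i)).2⟩
    rintro W ι B ⟨hinj, hhom, hO⟩
    exact hcert W ι B ⟨hinj, fun f hf => hhom f hf.1, hO⟩
end

section
/- Let O be an ALCHIQ ontology of depth 1. If for every irreflexive bouquet D that is consistent with O, has outdegree at most |O|, and uses only relations of O, there exists a 1-materialization of O and D, then O is materializable for the class of all such bouquets (i.e., each such bouquet has a full materialization, constructed as an increasing union of 1-materializability witnesses along frontier elements). -/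
/-- Description logic concepts (ALCHIQ syntax) over unary relation symbols `U` and binary
relation symbols `R`; roles are `Sum.inl r` (the relation `r`) and `Sum.inr r` (its
inverse `r⁻`). -/
inductive Cpt (U R : Type) : Type
  | top
  | bot
  | atom (A : U)
  | neg (C : Cpt U R)
  | conj (C D : Cpt U R)
  | disj (C D : Cpt U R)
  | ex (ρ : R ⊕ R) (C : Cpt U R)
  | all (ρ : R ⊕ R) (C : Cpt U R)
  | atLeast (n : ℕ) (ρ : R ⊕ R) (C : Cpt U R)
  | atMost (n : ℕ) (ρ : R ⊕ R) (C : Cpt U R)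

/-- Semantics of roles. -/
def rsem {R W : Type} (bin : R → Set (W × W)) : R ⊕ R → Set (W × W)
  | Sum.inl r => bin r
  | Sum.inr r => {p | (p.2, p.1) ∈ bin r}

/-- Semantics of concepts in the interpretation with carrier `W` given by `un` and `bin`. -/
def Cpt.sem {U R W : Type} (un : U → Set W) (bin : R → Set (W × W)) : Cpt U R → Set W
  | .top => Set.univ
  | .bot => ∅
  | .atom A => un A
  | .neg C => (C.sem un bin)ᶜ
  | .conj C D => C.sem un bin ∩ D.sem un bin
  | .disj C D => C.sem un bin ∪ D.sem un bin
  | .ex ρ C => {x | ∃ y, (x, y) ∈ rsem bin ρ ∧ y ∈ C.sem un bin}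
  | .all ρ C => {x | ∀ y, (x, y) ∈ rsem bin ρ → y ∈ C.sem un bin}
  | .atLeast n ρ C =>
      {x | ∃ Y : Finset W, Y.card = n ∧ ∀ y ∈ Y, (x, y) ∈ rsem bin ρ ∧ y ∈ C.sem un bin}
  | .atMost n ρ C =>
      {x | ∀ Y : Finset W, (∀ y ∈ Y, (x, y) ∈ rsem bin ρ ∧ y ∈ C.sem un bin) → Y.card ≤ n}

/-- The depth (quantifier nesting depth) of a concept. -/
def Cpt.depth {U R : Type} : Cpt U R → ℕ
  | .top => 0
  | .bot => 0
  | .atom _ => 0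
  | .neg C => C.depth
  | .conj C D => max C.depth D.depth
  | .disj C D => max C.depth D.depth
  | .ex _ C => C.depth + 1
  | .all _ C => C.depth + 1
  | .atLeast _ _ C => C.depth + 1
  | .atMost _ _ C => C.depth + 1

/-- Finite conjunction of a list of concepts. -/
def bigConj {U R : Type} (l : List (Cpt U R)) : Cpt U R := l.foldr .conj .top

/-- Finite disjunction of a list of concepts. -/
def bigDisj {U R : Type} (l : List (Cpt U R)) : Cpt U R := l.foldr .disj .bot

/-- A description logic ontology: concept inclusions and role inclusions. -/
structure DLOnt (U R : Type) where
  CIs : Set (Cpt U R × Cpt U R)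
  RIs : Set ((R ⊕ R) × (R ⊕ R))

/-- Satisfaction of an ontology in an interpretation. -/
def DLOnt.Sat {U R W : Type} (O : DLOnt U R) (un : U → Set W)
    (bin : R → Set (W × W)) : Prop :=
  (∀ p ∈ O.CIs, p.1.sem un bin ⊆ p.2.sem un bin) ∧
  (∀ p ∈ O.RIs, rsem bin p.1 ⊆ rsem bin p.2)

/-- A database instance over the DL signature, with constants from `V`. -/
structure DLInst (U R V : Type) where
  un : U → Set V
  bin : R → Set (V × V)

/-- The domain of an instance: the constants occurring in some fact. -/
def DLInst.dom {U R V : Type} (D : DLInst U R V) : Set V :=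
  {v | (∃ u, v ∈ D.un u) ∨ ∃ r w, (v, w) ∈ D.bin r ∨ (w, v) ∈ D.bin r}

/-- `(W, ι, un, bin)` is a model of the ontology `O` and the instance `D` (standard
names: `ι` injective, facts of `D` preserved). -/
def IsDLMod {U R V W : Type} (O : DLOnt U R) (D : DLInst U R V) (ι : V → W)
    (un : U → Set W) (bin : R → Set (W × W)) : Prop :=
  Function.Injective ι ∧
  (∀ u v, v ∈ D.un u → ι v ∈ un u) ∧
  (∀ r p, p ∈ D.bin r → (ι p.1, ι p.2) ∈ bin r) ∧
  O.Sat un bin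

/-- A conjunctive query of arity `k` over the DL signature, given by its finite canonical
database and its answer variables. -/
structure DLCQ (U R : Type) (k : ℕ) where
  V : Type
  finV : Finite V
  un : U → Set V
  bin : R → Set (V × V)
  finUn : {p : U × V | p.2 ∈ un p.1}.Finite
  finBin : {p : R × (V × V) | p.2 ∈ bin p.1}.Finite
  ans : Fin k → V

/-- `t` is an answer to the CQ `q` in the interpretation `(un, bin)`. -/
def DLCQAns {U R W : Type} {k : ℕ} (un : U → Set W) (bin : R → Set (W × W))
    (q : DLCQ U R k) (t : Fin k → W) : Prop :=
  ∃ h : q.V → W, (∀ u v, v ∈ q.un u → h v ∈ un u) ∧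
    (∀ r p, p ∈ q.bin r → (h p.1, h p.2) ∈ bin r) ∧ h ∘ q.ans = t

/-- `a` is a certain answer to the UCQ `qs` on `D` given `O`. -/
def DLCertainUCQ {U R V : Type} {k : ℕ} (O : DLOnt U R) (D : DLInst U R V)
    (qs : List (DLCQ U R k)) (a : Fin k → V) : Prop :=
  ∀ (W : Type) (ι : V → W) (un : U → Set W) (bin : R → Set (W × W)),
    IsDLMod O D ι un bin → ∃ q ∈ qs, DLCQAns un bin q (ι ∘ a)

/-- `D` is consistent w.r.t. `O`. -/
def DLConsistent {U R V : Type} (O : DLOnt U R) (D : DLInst U R V) : Prop :=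
  ∃ (W : Type) (ι : V → W) (un : U → Set W) (bin : R → Set (W × W)),
    IsDLMod O D ι un bin

/-- `(W, ι, un, bin)` is a materialization of `O` and `D`: a model whose UCQ-answers over
the domain of `D` are exactly the certain answers. -/
def IsDLMat {U R V W : Type} (O : DLOnt U R) (D : DLInst U R V) (ι : V → W)
    (un : U → Set W) (bin : R → Set (W × W)) : Prop :=
  IsDLMod O D ι un bin ∧
  ∀ (k : ℕ) (qs : List (DLCQ U R k)) (a : Fin k → V), (∀ i, a i ∈ D.dom) →
    ((∃ q ∈ qs, DLCQAns un bin q (ι ∘ a)) ↔ DLCertainUCQ O D qs a)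

/-- `O` is materializable: every consistent instance has a materialization. -/
def DLMaterializable {U R : Type} (O : DLOnt U R) : Prop :=
  ∀ (V : Type) (D : DLInst U R V), DLConsistent O D →
    ∃ (W : Type) (ι : V → W) (un : U → Set W) (bin : R → Set (W × W)),
      IsDLMat O D ι un bin

/-- `O` is materializable for the class `Mc` of instances. -/
def DLMaterializableFor {U R : Type} (O : DLOnt U R)
    (Mc : ∀ V : Type, DLInst U R V → Prop) : Prop :=
  ∀ (V : Type) (D : DLInst U R V), Mc V D → DLConsistent O D →
    ∃ (W : Type) (ι : V → W) (un : U → Set W) (bin : R → Set (W × W)),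
      IsDLMat O D ι un bin

/-- The size of a concept (number of symbols, numbers in counting quantifiers in unary). -/
def Cpt.size {U R : Type} : Cpt U R → ℕ
  | .top => 1
  | .bot => 1
  | .atom _ => 1
  | .neg C => C.size + 1
  | .conj C D => C.size + D.size + 1
  | .disj C D => C.size + D.size + 1
  | .ex _ C => C.size + 2
  | .all _ C => C.size + 2
  | .atLeast m _ C => C.size + m + 2
  | .atMost m _ C => C.size + m + 2

/-- The unary relation symbols occurring in a concept. -/
def Cpt.sigU {U R : Type} : Cpt U R → Set U
  | .top => ∅
  | .bot => ∅
  | .atom A => {A}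
  | .neg C => C.sigU
  | .conj C D => C.sigU ∪ D.sigU
  | .disj C D => C.sigU ∪ D.sigU
  | .ex _ C => C.sigU
  | .all _ C => C.sigU
  | .atLeast _ _ C => C.sigU
  | .atMost _ _ C => C.sigU

/-- The underlying binary relation symbol of a role. -/
def roleBase {R : Type} : R ⊕ R → R := Sum.elim id id

/-- The binary relation symbols occurring in a concept. -/
def Cpt.sigR {U R : Type} : Cpt U R → Set R
  | .top => ∅
  | .bot => ∅
  | .atom _ => ∅
  | .neg C => C.sigR
  | .conj C D => C.sigR ∪ D.sigR
  | .disj C D => C.sigR ∪ D.sigR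
  | .ex ρ C => insert (roleBase ρ) C.sigR
  | .all ρ C => insert (roleBase ρ) C.sigR
  | .atLeast _ ρ C => insert (roleBase ρ) C.sigR
  | .atMost _ ρ C => insert (roleBase ρ) C.sigR

/-- An ALCHIQ ontology, given by finite lists of concept inclusions and role inclusions. -/
structure DLOntL (U R : Type) where
  CIs : List (Cpt U R × Cpt U R)
  RIs : List ((R ⊕ R) × (R ⊕ R))

/-- The underlying (set-based) ontology. -/
def DLOntL.toOnt {U R : Type} (O : DLOntL U R) : DLOnt U R :=
  ⟨{p | p ∈ O.CIs}, {p | p ∈ O.RIs}⟩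

/-- The size `|O|` of an ontology. -/
def DLOntL.size {U R : Type} (O : DLOntL U R) : ℕ :=
  (O.CIs.map fun p => p.1.size + p.2.size + 1).sum + 3 * O.RIs.length

/-- `O` has depth at most `d`. -/
def DLOntL.depthLE {U R : Type} (O : DLOntL U R) (d : ℕ) : Prop :=
  ∀ p ∈ O.CIs, p.1.depth ≤ d ∧ p.2.depth ≤ d

/-- The unary relation symbols of `O`. -/
def DLOntL.sigU {U R : Type} (O : DLOntL U R) : Set U :=
  {u | ∃ p ∈ O.CIs, u ∈ p.1.sigU ∪ p.2.sigU}

/-- The binary relation symbols of `O`. -/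
def DLOntL.sigR {U R : Type} (O : DLOntL U R) : Set R :=
  {r | (∃ p ∈ O.CIs, r ∈ p.1.sigR ∪ p.2.sigR) ∨
    ∃ p ∈ O.RIs, r = roleBase p.1 ∨ r = roleBase p.2}

/-- `D` uses only relation symbols of `O`. -/
def SigIn {U R V : Type} (D : DLInst U R V) (O : DLOntL U R) : Prop :=
  (∀ u, (D.un u).Nonempty → u ∈ O.sigU) ∧ (∀ r, (D.bin r).Nonempty → r ∈ O.sigR)

/-- The neighbours of `a` in the instance `D`. -/
def Nb {U R V : Type} (D : DLInst U R V) (a : V) : Set V :=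
  {v | v ≠ a ∧ ∃ r, (a, v) ∈ D.bin r ∨ (v, a) ∈ D.bin r}

/-- `D` is a bouquet with root `a`: it equals the 1-neighbourhood of `a`. -/
def IsBouquet {U R V : Type} (D : DLInst U R V) (a : V) : Prop :=
  a ∈ D.dom ∧ ∀ v ∈ D.dom, v = a ∨ v ∈ Nb D a

/-- `D` is irreflexive: it contains no atom `r(v,v)`. -/
def Irrefl {U R V : Type} (D : DLInst U R V) : Prop := ∀ r v, (v, v) ∉ D.bin r

/-- The outdegree of the bouquet `D` with root `a` is at most `m`. -/
def OutdegLE {U R V : Type} (D : DLInst U R V) (a : V) (m : ℕ) : Prop :=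
  (Nb D a).Finite ∧ (Nb D a).ncard ≤ m

/-- The 1-neighbourhood of `w` in the interpretation given by `bin`. -/
def NbhdM {R W : Type} (bin : R → Set (W × W)) (w : W) : Set W :=
  {x | x = w ∨ ∃ r, (w, x) ∈ bin r ∨ (x, w) ∈ bin r}

/-- There is a 1-materialization of `O` and the bouquet `D` with root `a`: a model of `O`
and `D` whose 1-neighbourhood of the root admits, into every model of `O` and `D`, a
homomorphism preserving the domain of `D`. -/
def OneMaterializable {U R V : Type} (O : DLOntL U R) (D : DLInst U R V) (a : V) : Prop :=
  ∃ (W : Type) (ι : V → W) (un : U → Set W) (bin : R → Set (W × W)),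
    IsDLMod O.toOnt D ι un bin ∧
    ∀ (W' : Type) (ι' : V → W') (un' : U → Set W') (bin' : R → Set (W' × W')),
      IsDLMod O.toOnt D ι' un' bin' →
      ∃ g : W → W',
        (∀ u x, x ∈ NbhdM bin (ι a) → x ∈ un u → g x ∈ un' u) ∧
        (∀ r x y, x ∈ NbhdM bin (ι a) → y ∈ NbhdM bin (ι a) →
          (x, y) ∈ bin r → (g x, g y) ∈ bin' r) ∧
        (∀ d ∈ D.dom, g (ι d) = ι' d)

/-!
Unravel 1-materializations into a tree-like model `T`. Start from a 1-materialization `M₀` of `D`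
and keep the 1-neighbourhood of the root, with its edges at the root and between elements of `D`.
Each other element of it, and each element added later, is the root of a bouquet, its *seed*: its
atoms and its edges to the elements it is already attached to. The seed again satisfies the
hypotheses of the theorem, so it has a 1-materialization, and the new neighbours of its root there
are attached as children. The star of every vertex of `T` is then isomorphic to the star of the
root of a 1-materialization, a point of a model of `O`; since `O` has depth one, `T` is a model of
`O`. A homomorphism from `T` into any model of `O` and `D` is built along the tree from the
universal property of each 1-materialization in turn, so every UCQ answer in `T` is certain.

Doubling all elements makes the 1-materializations loop-free, so that the seeds are irreflexive,
and the target models loop-free, so that adjacent constants of a seed get distinct images.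
-/

section General

open Function Set

variable {U R W W' : Type}

def succSet (un : U → Set W) (bin : R → Set (W × W)) (ρ : R ⊕ R) (C : Cpt U R) (x : W) :
    Set W :=
  {y | (x, y) ∈ rsem bin ρ ∧ y ∈ C.sem un bin}

lemma mem_nbhdM_self (bin : R → Set (W × W)) (x : W) : x ∈ NbhdM bin x := Or.inl rfl

lemma mem_nbhdM_of_mem_rsem {bin : R → Set (W × W)} {ρ : R ⊕ R} {x y : W}
    (h : (x, y) ∈ rsem bin ρ) : y ∈ NbhdM bin x := by
  cases ρ with
  | inl r => exact Or.inr ⟨r, Or.inl h⟩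
  | inr r => exact Or.inr ⟨r, Or.inr h⟩

lemma succSet_subset_nbhdM (un : U → Set W) (bin : R → Set (W × W)) (ρ : R ⊕ R)
    (C : Cpt U R) (x : W) : succSet un bin ρ C x ⊆ NbhdM bin x :=
  fun _ hy => mem_nbhdM_of_mem_rsem hy.1

namespace Cpt

variable {un : U → Set W} {bin : R → Set (W × W)} {ρ : R ⊕ R} {C : Cpt U R} {x : W}

lemma mem_sem_ex_iff : x ∈ (ex ρ C).sem un bin ↔ (succSet un bin ρ C x).Nonempty := Iff.rfl

lemma mem_sem_all_iff : x ∈ (all ρ C).sem un bin ↔ succSet un bin ρ C.neg x = ∅ := by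
  simp only [sem, succSet, eq_empty_iff_forall_notMem, mem_ofPred_eq, mem_compl_iff, not_and,
    not_not]

lemma mem_sem_atLeast_iff {n : ℕ} :
    x ∈ (atLeast n ρ C).sem un bin ↔ (n : ℕ∞) ≤ (succSet un bin ρ C x).encard := by
  constructor
  · rintro ⟨Y, rfl, hY⟩
    rw [← encard_coe_eq_coe_finsetCard]
    exact encard_le_encard hY
  · intro h
    obtain ⟨Y, hYs, hYc⟩ := exists_subset_encard_eq h
    have hfin : Y.Finite := finite_of_encard_eq_coe hYc
    refine ⟨hfin.toFinset, ?_, fun y hy => hYs (hfin.mem_toFinset.1 hy)⟩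
    rw [← Nat.cast_inj (R := ℕ∞), ← encard_coe_eq_coe_finsetCard, hfin.coe_toFinset, hYc]

lemma mem_sem_atMost_iff {n : ℕ} :
    x ∈ (atMost n ρ C).sem un bin ↔ (succSet un bin ρ C x).encard ≤ n := by
  constructor
  · intro h
    by_contra hlt
    obtain ⟨Y, hYs, hYc⟩ := exists_subset_encard_eq (Order.add_one_le_of_lt (not_le.1 hlt))
    have hfin : Y.Finite := finite_of_encard_eq_coe (k := n + 1) (by exact_mod_cast hYc)
    have hcard := h hfin.toFinset fun y hy => hYs (hfin.mem_toFinset.1 hy)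
    rw [← Nat.cast_le (α := ℕ∞), ← encard_coe_eq_coe_finsetCard, hfin.coe_toFinset, hYc]
      at hcard
    norm_cast at hcard
    omega
  · intro h Y hY
    rw [← Nat.cast_le (α := ℕ∞), ← encard_coe_eq_coe_finsetCard]
    exact (encard_le_encard hY).trans h

variable {un' : U → Set W'} {bin' : R → Set (W' × W')}

theorem mem_sem_iff_of_encard_succSet_eq {x' : W'} (d : ℕ)
    (hatom : ∀ u, x ∈ un u ↔ x' ∈ un' u)
    (hsucc : ∀ ρ (C : Cpt U R), C.depth < d →
      (succSet un bin ρ C x).encard = (succSet un' bin' ρ C x').encard) :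
    ∀ C : Cpt U R, C.depth ≤ d → (x ∈ C.sem un bin ↔ x' ∈ C.sem un' bin') := by
  intro C
  induction C with
  | top | bot => exact fun _ => Iff.rfl
  | atom A => exact fun _ => hatom A
  | neg C ih => exact fun hC => not_congr (ih hC)
  | conj C D ihC ihD =>
    intro hC
    simp only [depth, max_le_iff] at hC
    exact and_congr (ihC hC.1) (ihD hC.2)
  | disj C D ihC ihD =>
    intro hC
    simp only [depth, max_le_iff] at hC
    exact or_congr (ihC hC.1) (ihD hC.2)
  | ex ρ C _ =>
    intro hC
    rw [mem_sem_ex_iff, mem_sem_ex_iff, ← encard_ne_zero, ← encard_ne_zero,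
      hsucc ρ C (by simp only [depth] at hC; omega)]
  | all ρ C _ =>
    intro hC
    rw [mem_sem_all_iff, mem_sem_all_iff, ← encard_eq_zero, ← encard_eq_zero,
      hsucc ρ C.neg (by simp only [depth] at hC ⊢; omega)]
  | atLeast n ρ C _ =>
    intro hC
    rw [mem_sem_atLeast_iff, mem_sem_atLeast_iff, hsucc ρ C (by simp only [depth] at hC; omega)]
  | atMost n ρ C _ =>
    intro hC
    rw [mem_sem_atMost_iff, mem_sem_atMost_iff, hsucc ρ C (by simp only [depth] at hC; omega)]

theorem mem_sem_iff_of_depth_eq_zero {x' : W'} (hatom : ∀ u, x ∈ un u ↔ x' ∈ un' u)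
    (hC : C.depth = 0) : x ∈ C.sem un bin ↔ x' ∈ C.sem un' bin' :=
  mem_sem_iff_of_encard_succSet_eq (bin := bin) (bin' := bin') 0 hatom
    (fun _ _ h => absurd h (Nat.not_lt_zero _)) C hC.le

end Cpt

variable {un : U → Set W} {bin : R → Set (W × W)} {un' : U → Set W'}
  {bin' : R → Set (W' × W')}

structure IsCover (un' : U → Set W') (bin' : R → Set (W' × W')) (un : U → Set W)
    (bin : R → Set (W × W)) (π : W' → W) (K : W' → W' → Prop) : Prop where
  mem_un : ∀ u x, x ∈ un' u ↔ π x ∈ un u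
  mem_bin : ∀ r p q, (p, q) ∈ bin' r ↔ (π p, π q) ∈ bin r ∧ K p q
  symm : ∀ p q, K p q → K q p
  lift_unique : ∀ p q q', K p q → K p q' → π q = π q' → q = q'
  lift_exists : ∀ p w, ∃ q, π q = w ∧ K p q

structure IsHom_s13 (un : U → Set W) (bin : R → Set (W × W)) (un' : U → Set W')
    (bin' : R → Set (W' × W')) (g : W → W') : Prop where
  mem_un : ∀ u x, x ∈ un u → g x ∈ un' u
  mem_bin : ∀ r x y, (x, y) ∈ bin r → (g x, g y) ∈ bin' r

def IsHomOn (un : U → Set W) (bin : R → Set (W × W)) (un' : U → Set W')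
    (bin' : R → Set (W' × W')) (A : Set W) (g : W → W') : Prop :=
  (∀ u x, x ∈ A → x ∈ un u → g x ∈ un' u) ∧
    ∀ r x y, x ∈ A → y ∈ A → (x, y) ∈ bin r → (g x, g y) ∈ bin' r

lemma IsHom_s13.comp {W'' : Type} {un'' : U → Set W''} {bin'' : R → Set (W'' × W'')} {g : W → W'}
    {f : W' → W''} (hf : IsHom_s13 un' bin' un'' bin'' f) (hg : IsHom_s13 un bin un' bin' g) :
    IsHom_s13 un bin un'' bin'' (f ∘ g) :=
  ⟨fun u x hx => hf.mem_un u _ (hg.mem_un u x hx),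
    fun r x y h => hf.mem_bin r _ _ (hg.mem_bin r x y h)⟩

lemma DLCQAns.map {k : ℕ} {q : DLCQ U R k} {t : Fin k → W} {g : W → W'}
    (hg : IsHom_s13 un bin un' bin' g) (h : DLCQAns un bin q t) : DLCQAns un' bin' q (g ∘ t) := by
  obtain ⟨h₀, hun, hbin, rfl⟩ := h
  exact ⟨g ∘ h₀, fun u v hv => hg.mem_un u _ (hun u v hv),
    fun r p hp => hg.mem_bin r _ _ (hbin r p hp), rfl⟩

namespace IsCover

variable {π : W' → W} {K : W' → W' → Prop}

lemma mem_rsem (hπ : IsCover un' bin' un bin π K) (ρ : R ⊕ R) (p q : W') :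
    (p, q) ∈ rsem bin' ρ ↔ (π p, π q) ∈ rsem bin ρ ∧ K p q := by
  cases ρ with
  | inl r => exact hπ.mem_bin r p q
  | inr r => exact (hπ.mem_bin r q p).trans (and_congr Iff.rfl ⟨hπ.symm q p, hπ.symm p q⟩)

theorem mem_sem (hπ : IsCover un' bin' un bin π K) (C : Cpt U R) (x : W') :
    x ∈ C.sem un' bin' ↔ π x ∈ C.sem un bin := by
  suffices ∀ d, ∀ C : Cpt U R, C.depth ≤ d → ∀ x, x ∈ C.sem un' bin' ↔ π x ∈ C.sem un bin
    from this _ C le_rfl x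
  intro d
  induction d with
  | zero => exact fun C hC x => Cpt.mem_sem_iff_of_depth_eq_zero (hπ.mem_un · x) (by omega)
  | succ d ih =>
    intro C hC x
    refine Cpt.mem_sem_iff_of_encard_succSet_eq (d + 1) (hπ.mem_un · x) (fun ρ C hC => ?_) C hC
    have himage : π '' succSet un' bin' ρ C x = succSet un bin ρ C (π x) := by
      ext w
      constructor
      · rintro ⟨q, ⟨hxq, hq⟩, rfl⟩
        exact ⟨((hπ.mem_rsem ρ x q).1 hxq).1, (ih C (by omega) q).1 hq⟩
      · rintro ⟨hxw, hw⟩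
        obtain ⟨q, rfl, hK⟩ := hπ.lift_exists x w
        exact ⟨q, ⟨(hπ.mem_rsem ρ x q).2 ⟨hxw, hK⟩, (ih C (by omega) q).2 hw⟩, rfl⟩
    rw [← himage, InjOn.encard_image]
    exact fun q hq q' hq' he => hπ.lift_unique x q q' ((hπ.mem_rsem ρ x q).1 hq.1).2
      ((hπ.mem_rsem ρ x q').1 hq'.1).2 he

theorem sat (hπ : IsCover un' bin' un bin π K) {O : DLOnt U R} (h : O.Sat un bin) :
    O.Sat un' bin' := by
  refine ⟨fun p hp x hx => ?_, fun p hp q hq => ?_⟩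
  · exact (hπ.mem_sem p.2 x).2 (h.1 p hp ((hπ.mem_sem p.1 x).1 hx))
  · rw [hπ.mem_rsem] at hq ⊢
    exact ⟨h.2 p hp hq.1, hq.2⟩

lemma isHom (hπ : IsCover un' bin' un bin π K) : IsHom_s13 un' bin' un bin π :=
  ⟨fun u x hx => (hπ.mem_un u x).1 hx, fun r x y hxy => ((hπ.mem_bin r x y).1 hxy).1⟩

end IsCover

def doubleUn (un : U → Set W) : U → Set (W × Bool) := fun u => Prod.fst ⁻¹' un u

open Classical in
/-- The flag flips along an edge exactly when the edge is a loop downstairs, so that the double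
has no loops. -/
def flagCompat (p q : W × Bool) : Prop := q.2 = if q.1 = p.1 then !p.2 else p.2

def doubleBin (bin : R → Set (W × W)) : R → Set ((W × Bool) × (W × Bool)) :=
  fun r => {pq | (pq.1.1, pq.2.1) ∈ bin r ∧ flagCompat pq.1 pq.2}

open Classical in
lemma isCover_double (un : U → Set W) (bin : R → Set (W × W)) :
    IsCover (doubleUn un) (doubleBin bin) un bin Prod.fst flagCompat where
  mem_un _ _ := Iff.rfl
  mem_bin _ _ _ := Iff.rfl
  symm p q h := by
    unfold flagCompat at h ⊢
    by_cases he : q.1 = p.1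
    · rw [if_pos he] at h
      rw [if_pos he.symm, h, Bool.not_not]
    · rw [if_neg he] at h
      rw [if_neg (Ne.symm he), h]
  lift_unique p q q' h h' he := Prod.ext he (by rw [h, h', he])
  lift_exists p w := ⟨(w, if w = p.1 then !p.2 else p.2), rfl, rfl⟩

lemma doubleBin_loopFree (bin : R → Set (W × W)) (r : R) (p : W × Bool) :
    (p, p) ∉ doubleBin bin r := fun h => by simpa [flagCompat] using h.2

def copyUn (I : Type) (un : U → Set W) : U → Set (I × W) := fun u => Prod.snd ⁻¹' un u

def copyBin (I : Type) (bin : R → Set (W × W)) : R → Set ((I × W) × (I × W)) :=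
  fun r => {pq | (pq.1.2, pq.2.2) ∈ bin r ∧ pq.1.1 = pq.2.1}

lemma isCover_copy (I : Type) (un : U → Set W) (bin : R → Set (W × W)) :
    IsCover (copyUn I un) (copyBin I bin) un bin Prod.snd (fun p q => p.1 = q.1) where
  mem_un _ _ := Iff.rfl
  mem_bin _ _ _ := Iff.rfl
  symm _ _ h := h.symm
  lift_unique _ _ _ h h' he := Prod.ext (h.symm.trans h') he
  lift_exists p w := ⟨(p.1, w), rfl, rfl⟩

structure IsNbhdEnum (bin : R → Set (W × W)) (x : W) {N : Type} (e : Option N → W) : Prop where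
  injective : Injective e
  none_eq : e none = x
  range_eq : range e = NbhdM bin x

lemma IsNbhdEnum.succSet_eq_image {N : Type} {x : W} {e : Option N → W}
    (he : IsNbhdEnum bin x e) (ρ : R ⊕ R) (C : Cpt U R) :
    succSet un bin ρ C x = e '' {o | e o ∈ succSet un bin ρ C x} := by
  refine (image_preimage_eq_of_subset ?_).symm
  rw [he.range_eq]
  exact succSet_subset_nbhdM un bin ρ C x

def LocallySat (O : DLOnt U R) (un : U → Set W) (bin : R → Set (W × W)) (x : W) : Prop :=
  ∃ (W' : Type) (un' : U → Set W') (bin' : R → Set (W' × W')) (x' : W'), O.Sat un' bin' ∧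
    (∀ C : Cpt U R, C.depth ≤ 1 → (x ∈ C.sem un bin ↔ x' ∈ C.sem un' bin')) ∧
    ∀ y ∈ NbhdM bin x, ∃ y', ∀ ρ, (x, y) ∈ rsem bin ρ ↔ (x', y') ∈ rsem bin' ρ

theorem DLOnt.sat_of_forall_locallySat {O : DLOnt U R}
    (hO : ∀ p ∈ O.CIs, p.1.depth ≤ 1 ∧ p.2.depth ≤ 1) (h : ∀ x, LocallySat O un bin x) :
    O.Sat un bin := by
  refine ⟨fun p hp x hx => ?_, fun p hp xy hxy => ?_⟩
  · obtain ⟨W', un', bin', x', hsat, hsem, -⟩ := h x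
    exact (hsem p.2 (hO p hp).2).2 (hsat.1 p hp ((hsem p.1 (hO p hp).1).1 hx))
  · obtain ⟨W', un', bin', x', hsat, -, hedge⟩ := h xy.1
    obtain ⟨y', hy'⟩ := hedge xy.2 (mem_nbhdM_of_mem_rsem hxy)
    exact (hy' p.2).2 (hsat.2 p hp ((hy' p.1).1 hxy))

theorem locallySat_of_nbhdEnum {O : DLOnt U R} (hsat : O.Sat un' bin') {N : Type} {x : W}
    {x' : W'} {e : Option N → W} {e' : Option N → W'} (he : IsNbhdEnum bin x e)
    (he' : IsNbhdEnum bin' x' e') (hun : ∀ u o, e o ∈ un u ↔ e' o ∈ un' u)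
    (hout : ∀ r o, (x, e o) ∈ bin r ↔ (x', e' o) ∈ bin' r)
    (hin : ∀ r o, (e o, x) ∈ bin r ↔ (e' o, x') ∈ bin' r) : LocallySat O un bin x := by
  have hrsem : ∀ ρ o, (x, e o) ∈ rsem bin ρ ↔ (x', e' o) ∈ rsem bin' ρ := by
    rintro (r | r) o
    exacts [hout r o, hin r o]
  have hsucc : ∀ ρ (C : Cpt U R), C.depth < 1 →
      (succSet un bin ρ C x).encard = (succSet un' bin' ρ C x').encard := by
    intro ρ C hC
    have hpre : {o | e o ∈ succSet un bin ρ C x} = {o | e' o ∈ succSet un' bin' ρ C x'} := by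
      ext o
      exact and_congr (hrsem ρ o) (Cpt.mem_sem_iff_of_depth_eq_zero (hun · o) (by omega))
    rw [he.succSet_eq_image, he'.succSet_eq_image, he.injective.encard_image,
      he'.injective.encard_image, hpre]
  refine ⟨W', un', bin', x', hsat, Cpt.mem_sem_iff_of_encard_succSet_eq 1 (fun u => ?_) hsucc,
    fun y hy => ?_⟩
  · rw [← he.none_eq, ← he'.none_eq]
    exact hun u none
  · rw [← he.range_eq] at hy
    obtain ⟨o, rfl⟩ := hy
    exact ⟨e' o, fun ρ => hrsem ρ o⟩

lemma rsem_congr {bin₁ bin₂ : R → Set (W × W)} {ρ : R ⊕ R}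
    (h : bin₁ (roleBase ρ) = bin₂ (roleBase ρ)) : rsem bin₁ ρ = rsem bin₂ ρ := by
  cases ρ with
  | inl r => exact h
  | inr r => simp only [rsem]; rw [show bin₁ r = bin₂ r from h]

theorem Cpt.sem_congr {un' : U → Set W} {bin' : R → Set (W × W)} (C : Cpt U R)
    (hu : ∀ u ∈ C.sigU, un u = un' u) (hb : ∀ r ∈ C.sigR, bin r = bin' r) :
    C.sem un bin = C.sem un' bin' := by
  induction C with
  | top | bot => rfl
  | atom A => exact hu A rfl
  | neg C ih => simp only [sem, ih hu hb]
  | conj C D ihC ihD | disj C D ihC ihD =>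
    simp only [sem, ihC (fun u h => hu u (Or.inl h)) (fun r h => hb r (Or.inl h)),
      ihD (fun u h => hu u (Or.inr h)) (fun r h => hb r (Or.inr h))]
  | ex ρ C ih | all ρ C ih | atLeast _ ρ C ih | atMost _ ρ C ih =>
    simp only [sem, ih hu (fun r h => hb r (Or.inr h)), rsem_congr (hb (roleBase ρ) (Or.inl rfl))]

def restrictUn (SU : Set U) (un : U → Set W) : U → Set W :=
  fun u => {x | u ∈ SU ∧ x ∈ un u}

def restrictBin (SR : Set R) (bin : R → Set (W × W)) : R → Set (W × W) :=
  fun r => {p | r ∈ SR ∧ p ∈ bin r}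

lemma restrictUn_of_mem {SU : Set U} {u : U} (hu : u ∈ SU) : restrictUn SU un u = un u := by
  ext
  simp [restrictUn, hu]

lemma restrictBin_of_mem {SR : Set R} {r : R} (hr : r ∈ SR) : restrictBin SR bin r = bin r := by
  ext
  simp [restrictBin, hr]

theorem DLOntL.sat_restrict (O : DLOntL U R) (h : O.toOnt.Sat un bin) :
    O.toOnt.Sat (restrictUn O.sigU un) (restrictBin O.sigR bin) := by
  refine ⟨fun p hp => ?_, fun p hp => ?_⟩
  · have hp' : p ∈ O.CIs := hp
    rw [Cpt.sem_congr p.1 (fun u hu => restrictUn_of_mem (SU := O.sigU) ⟨p, hp', Or.inl hu⟩)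
        (fun r hr => restrictBin_of_mem (SR := O.sigR) (Or.inl ⟨p, hp', Or.inl hr⟩)),
      Cpt.sem_congr p.2 (fun u hu => restrictUn_of_mem (SU := O.sigU) ⟨p, hp', Or.inr hu⟩)
        (fun r hr => restrictBin_of_mem (SR := O.sigR) (Or.inl ⟨p, hp', Or.inr hr⟩))]
    exact h.1 p hp
  · have hp' : p ∈ O.RIs := hp
    rw [rsem_congr (restrictBin_of_mem (SR := O.sigR) (Or.inr ⟨p, hp', Or.inl rfl⟩)),
      rsem_congr (restrictBin_of_mem (SR := O.sigR) (Or.inr ⟨p, hp', Or.inr rfl⟩))]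
    exact h.2 p hp

lemma DLOntL.sat_of_size_eq_zero (O : DLOntL U R) (h : O.size = 0) (un : U → Set W)
    (bin : R → Set (W × W)) : O.toOnt.Sat un bin := by
  unfold DLOntL.size at h
  refine ⟨fun p hp => ?_, fun p hp => ?_⟩
  · have := List.le_sum_of_mem (List.mem_map_of_mem (f := fun p : Cpt U R × Cpt U R =>
      p.1.size + p.2.size + 1) hp)
    omega
  · have := List.length_pos_of_mem hp
    omega

section Materialization

variable {V : Type} {D : DLInst U R V}

lemma IsDLMod.double {O : DLOnt U R} {ι : V → W} (h : IsDLMod O D ι un bin) (hir : Irrefl D) :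
    IsDLMod O D (fun d => (ι d, true)) (doubleUn un) (doubleBin bin) := by
  obtain ⟨hinj, hun, hbin, hsat⟩ := h
  refine ⟨fun d e he => hinj (congrArg Prod.fst he), hun, fun r p hp => ⟨hbin r p hp, ?_⟩,
    (isCover_double un bin).sat hsat⟩
  have hne : ι p.2 ≠ ι p.1 := fun he =>
    hir r p.1 (by rwa [show p = (p.1, p.1) from Prod.ext rfl (hinj he)] at hp)
  simp [flagCompat, hne]

lemma IsDLMod.restrict {O : DLOntL U R} {ι : V → W} (h : IsDLMod O.toOnt D ι un bin)
    (hsig : SigIn D O) :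
    IsDLMod O.toOnt D ι (restrictUn O.sigU un) (restrictBin O.sigR bin) :=
  ⟨h.1, fun u v hv => ⟨hsig.1 u ⟨v, hv⟩, h.2.1 u v hv⟩,
    fun r p hp => ⟨hsig.2 r ⟨p, hp⟩, h.2.2.1 r p hp⟩, O.sat_restrict h.2.2.2⟩

variable {O : DLOnt U R}

theorem isDLMat_of_forall_hom {ι : V → W} (hmod : IsDLMod O D ι un bin)
    (huniv : ∀ (W' : Type) (ι' : V → W') (un' : U → Set W') (bin' : R → Set (W' × W')),
      IsDLMod O D ι' un' bin' →
        ∃ g : W → W', IsHom_s13 un bin un' bin' g ∧ ∀ d ∈ D.dom, g (ι d) = ι' d) :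
    IsDLMat O D ι un bin := by
  refine ⟨hmod, fun k qs a ha => ⟨?_, fun hcert => hcert W ι un bin hmod⟩⟩
  rintro ⟨q, hq, hans⟩ W' ι' un' bin' hmod'
  obtain ⟨g, hg, hgι⟩ := huniv W' ι' un' bin' hmod'
  refine ⟨q, hq, ?_⟩
  convert hans.map hg using 1
  funext i
  exact (hgι (a i) (ha i)).symm

open Classical in
/-- The constants outside `dom D` are made distinct by putting each of them into its own copy of
the model. -/
theorem exists_isDLMat_of_forall_hom (ι : V → W) (hsat : O.Sat un bin) (hinj : InjOn ι D.dom)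
    (hun : ∀ u v, v ∈ D.un u → ι v ∈ un u)
    (hbin : ∀ r p, p ∈ D.bin r → (ι p.1, ι p.2) ∈ bin r)
    (huniv : ∀ (W' : Type) (ι' : V → W') (un' : U → Set W') (bin' : R → Set (W' × W')),
      IsDLMod O D ι' un' bin' →
        ∃ g : W → W', IsHom_s13 un bin un' bin' g ∧ ∀ d ∈ D.dom, g (ι d) = ι' d) :
    ∃ (W₁ : Type) (ι₁ : V → W₁) (un₁ : U → Set W₁) (bin₁ : R → Set (W₁ × W₁)),
      IsDLMat O D ι₁ un₁ bin₁ := by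
  let ι₁ : V → Option V × W := fun d => (if d ∈ D.dom then none else some d, ι d)
  have hdom : ∀ {d}, d ∈ D.dom → ι₁ d = (none, ι d) := fun hd => by
    simp only [ι₁, if_pos hd]
  have hcov := isCover_copy (Option V) un bin
  refine ⟨_, ι₁, copyUn _ un, copyBin _ bin,
    isDLMat_of_forall_hom ⟨?_, ?_, ?_, hcov.sat hsat⟩ ?_⟩
  · intro d d' h
    by_cases hd : d ∈ D.dom <;> by_cases hd' : d' ∈ D.dom <;>
      simp only [ι₁, hd, hd', if_true, if_false, Prod.mk.injEq, reduceCtorEq, false_and,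
        Option.some.injEq] at h
    exacts [hinj hd hd' h.2, h.1]
  · intro u v hv
    rw [hdom (Or.inl ⟨u, hv⟩)]
    exact hun u v hv
  · intro r p hp
    rw [hdom (Or.inr ⟨r, p.2, Or.inl hp⟩), hdom (Or.inr ⟨r, p.1, Or.inr hp⟩)]
    exact ⟨hbin r p hp, rfl⟩
  · intro W' ι' un' bin' hmod'
    obtain ⟨g, hg, hgι⟩ := huniv W' ι' un' bin' hmod'
    refine ⟨g ∘ Prod.snd, hg.comp hcov.isHom, fun d hd => ?_⟩
    rw [comp_apply, hdom hd]
    exact hgι d hd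

lemma IsDLMod.isHom {ι : V → W} (h : IsDLMod O D ι un bin) : IsHom_s13 D.un D.bin un bin ι :=
  ⟨h.2.1, fun r x y hxy => h.2.2.1 r (x, y) hxy⟩

theorem exists_isDLMat_self (h : O.Sat D.un D.bin) :
    ∃ (W₁ : Type) (ι₁ : V → W₁) (un₁ : U → Set W₁) (bin₁ : R → Set (W₁ × W₁)),
      IsDLMat O D ι₁ un₁ bin₁ :=
  exists_isDLMat_of_forall_hom id h (injOn_id _) (fun _ _ h => h) (fun _ _ h => h)
    fun _ ι' _ _ hmod' => ⟨ι', hmod'.isHom, fun _ _ => rfl⟩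

end Materialization

structure OneMat {V : Type} (O : DLOntL U R) (E : DLInst U R V) (b : V) : Type 1 where
  W : Type
  ι : V → W
  un : U → Set W
  bin : R → Set (W × W)
  isDLMod : IsDLMod O.toOnt E ι un bin
  loopFree : ∀ r x, (x, x) ∉ bin r
  sigU : ∀ u, (un u).Nonempty → u ∈ O.sigU
  sigR : ∀ r, (bin r).Nonempty → r ∈ O.sigR
  hom : ∀ (W' : Type) (ι' : V → W') (un' : U → Set W') (bin' : R → Set (W' × W')),
    IsDLMod O.toOnt E ι' un' bin' → ∃ g : W → W',
      IsHomOn un bin un' bin' (NbhdM bin (ι b)) g ∧ ∀ d ∈ E.dom, g (ι d) = ι' d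

lemma fst_mem_nbhdM_of_mem_nbhdM_restrict {SR : Set R} {p q : W × Bool}
    (h : q ∈ NbhdM (restrictBin SR (doubleBin bin)) p) : q.1 ∈ NbhdM bin p.1 := by
  rcases h with rfl | ⟨r, h | h⟩
  exacts [Or.inl rfl, Or.inr ⟨r, Or.inl h.2.1⟩, Or.inr ⟨r, Or.inr h.2.1⟩]

/-- Doubling removes the loops, and restricting to the signature of `O` keeps the seeds built
later within it. -/
lemma OneMaterializable.nonempty_oneMat {V : Type} {O : DLOntL U R} {E : DLInst U R V} {b : V}
    (h : OneMaterializable O E b) (hir : Irrefl E) (hsig : SigIn E O) :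
    Nonempty (OneMat O E b) := by
  obtain ⟨W, ι, un, bin, hmod, hhom⟩ := h
  refine ⟨⟨W × Bool, fun d => (ι d, true), restrictUn O.sigU (doubleUn un),
    restrictBin O.sigR (doubleBin bin), (hmod.double hir).restrict hsig,
    fun r x hx => doubleBin_loopFree bin r x hx.2, fun u ⟨_, hx⟩ => hx.1,
    fun r ⟨_, hx⟩ => hx.1, fun W' ι' un' bin' hmod' => ?_⟩⟩
  obtain ⟨g, hgu, hgb, hgι⟩ := hhom W' ι' un' bin' hmod'
  have hfst := @fst_mem_nbhdM_of_mem_nbhdM_restrict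
  exact ⟨fun p => g p.1, ⟨fun u x hx hxu => hgu u x.1 (hfst hx) hxu.2,
    fun r x y hx hy hxy => hgb r x.1 y.1 (hfst hx) (hfst hy) hxy.2.1⟩, hgι⟩

end General

noncomputable section Unravelling

open Function Set

variable {U R : Type}

structure Setup (U R : Type) : Type 1 where
  O : DLOntL U R
  depth_le : O.depthLE 1
  oneMaterializable : ∀ (V : Type) (D : DLInst U R V) (a : V), IsBouquet D a → Irrefl D →
    SigIn D O → OutdegLE D a O.size → DLConsistent O.toOnt D → OneMaterializable O D a
  one_le_size : 1 ≤ O.size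
  V : Type
  D : DLInst U R V
  a : V
  isBouquet : IsBouquet D a
  irrefl : Irrefl D
  sigIn : SigIn D O
  outdegLE : OutdegLE D a O.size
  consistent : DLConsistent O.toOnt D

namespace Setup

variable (S : Setup U R)

/-- A bouquet over `Fin (n + 1)` with root `0` and edges only at the root, described by the
atoms of its elements and the labels of the edges between the root and each leaf. -/
structure Seed : Type where
  n : ℕ
  one_le : 1 ≤ n
  le_size : n ≤ S.O.size
  atoms : Fin (n + 1) → Set U
  outRoles : Fin n → Set R
  inRoles : Fin n → Set R
  roles_nonempty : ∀ i, (outRoles i ∪ inRoles i).Nonempty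
  atoms_subset : ∀ j, atoms j ⊆ S.O.sigU
  outRoles_subset : ∀ i, outRoles i ⊆ S.O.sigR
  inRoles_subset : ∀ i, inRoles i ⊆ S.O.sigR
  realizable :
    ∃ (W : Type) (ι : Fin (n + 1) → W) (un : U → Set W) (bin : R → Set (W × W)),
      Injective ι ∧ S.O.toOnt.Sat un bin ∧ (∀ u j, ι j ∈ un u ↔ u ∈ atoms j) ∧
      ∀ r i, ((ι 0, ι i.succ) ∈ bin r ↔ r ∈ outRoles i) ∧
        ((ι i.succ, ι 0) ∈ bin r ↔ r ∈ inRoles i)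

namespace Seed

variable {S} (s : S.Seed)

def inst : DLInst U R (Fin (s.n + 1)) where
  un u := {j | u ∈ s.atoms j}
  bin r :=
    {p | ∃ i, (p = (0, i.succ) ∧ r ∈ s.outRoles i) ∨ (p = (i.succ, 0) ∧ r ∈ s.inRoles i)}

lemma mem_inst_dom (j : Fin (s.n + 1)) : j ∈ s.inst.dom := by
  refine Or.inr ?_
  cases j using Fin.cases with
  | zero =>
    obtain ⟨r, hr | hr⟩ := s.roles_nonempty ⟨0, s.one_le⟩
    exacts [⟨r, _, Or.inl ⟨_, Or.inl ⟨rfl, hr⟩⟩⟩,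
      ⟨r, _, Or.inr ⟨_, Or.inr ⟨rfl, hr⟩⟩⟩]
  | succ i =>
    obtain ⟨r, hr | hr⟩ := s.roles_nonempty i
    exacts [⟨r, 0, Or.inr ⟨i, Or.inl ⟨rfl, hr⟩⟩⟩,
      ⟨r, 0, Or.inl ⟨i, Or.inr ⟨rfl, hr⟩⟩⟩]

lemma nb_inst : Nb s.inst 0 = range Fin.succ := by
  ext v
  constructor
  · rintro ⟨hv, r, ⟨i, ⟨hp, -⟩ | ⟨hp, -⟩⟩ | ⟨i, ⟨hp, -⟩ | ⟨hp, -⟩⟩⟩ <;>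
      simp only [Prod.mk.injEq] at hp
    exacts [⟨i, hp.2.symm⟩, absurd hp.2 hv, absurd hp.1 hv, ⟨i, hp.1.symm⟩]
  · rintro ⟨i, rfl⟩
    obtain ⟨r, hr | hr⟩ := s.roles_nonempty i
    exacts [⟨i.succ_ne_zero, r, Or.inl ⟨i, Or.inl ⟨rfl, hr⟩⟩⟩,
      ⟨i.succ_ne_zero, r, Or.inr ⟨i, Or.inr ⟨rfl, hr⟩⟩⟩]

lemma isBouquet_inst : IsBouquet s.inst 0 := by
  refine ⟨s.mem_inst_dom 0, fun v _ => ?_⟩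
  cases v using Fin.cases with
  | zero => exact Or.inl rfl
  | succ i => exact Or.inr (s.nb_inst ▸ ⟨i, rfl⟩)

lemma irrefl_inst : Irrefl s.inst := by
  rintro r v ⟨i, ⟨hp, -⟩ | ⟨hp, -⟩⟩ <;> simp only [Prod.mk.injEq] at hp
  exacts [i.succ_ne_zero (hp.2.symm.trans hp.1), i.succ_ne_zero (hp.1.symm.trans hp.2)]

lemma sigIn_inst : SigIn s.inst S.O :=
  ⟨fun _ ⟨j, hj⟩ => s.atoms_subset j hj,
    fun _ ⟨_, i, h⟩ =>
      h.elim (fun h => s.outRoles_subset i h.2) (fun h => s.inRoles_subset i h.2)⟩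

lemma outdegLE_inst : OutdegLE s.inst 0 S.O.size := by
  rw [OutdegLE, nb_inst, ← image_univ]
  refine ⟨toFinite _, ?_⟩
  rw [ncard_image_of_injective _ (Fin.succ_injective _), ncard_univ, Nat.card_eq_fintype_card,
    Fintype.card_fin]
  exact s.le_size

lemma isDLMod_inst {W : Type} {ι : Fin (s.n + 1) → W} {un : U → Set W}
    {bin : R → Set (W × W)} (hinj : Injective ι) (hsat : S.O.toOnt.Sat un bin)
    (hun : ∀ u j, u ∈ s.atoms j → ι j ∈ un u)
    (hout : ∀ r i, r ∈ s.outRoles i → (ι 0, ι i.succ) ∈ bin r)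
    (hin : ∀ r i, r ∈ s.inRoles i → (ι i.succ, ι 0) ∈ bin r) :
    IsDLMod S.O.toOnt s.inst ι un bin := by
  refine ⟨hinj, fun u j hj => hun u j hj, ?_, hsat⟩
  rintro r p ⟨i, ⟨rfl, hr⟩ | ⟨rfl, hr⟩⟩
  exacts [hout r i hr, hin r i hr]

lemma consistent_inst : DLConsistent S.O.toOnt s.inst := by
  obtain ⟨W, ι, un, bin, hinj, hsat, hun, hbin⟩ := s.realizable
  exact ⟨W, ι, un, bin, s.isDLMod_inst hinj hsat (fun u j => (hun u j).2)
    (fun r i => (hbin r i).1.2) (fun r i => (hbin r i).2.2)⟩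

def mat : OneMat S.O s.inst 0 :=
  (S.oneMaterializable _ s.inst 0 s.isBouquet_inst s.irrefl_inst s.sigIn_inst
    s.outdegLE_inst s.consistent_inst |>.nonempty_oneMat s.irrefl_inst s.sigIn_inst).some

lemma mat_mem_nbhdM (j : Fin (s.n + 1)) : s.mat.ι j ∈ NbhdM s.mat.bin (s.mat.ι 0) := by
  cases j using Fin.cases with
  | zero => exact Or.inl rfl
  | succ i =>
    obtain ⟨r, hr | hr⟩ := s.roles_nonempty i
    exacts [Or.inr ⟨r, Or.inl (s.mat.isDLMod.2.2.1 r _ ⟨i, Or.inl ⟨rfl, hr⟩⟩)⟩,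
      Or.inr ⟨r, Or.inr (s.mat.isDLMod.2.2.1 r _ ⟨i, Or.inr ⟨rfl, hr⟩⟩)⟩]

/-- The 1-materialization maps homomorphically into a model realizing the seed exactly. -/
lemma mat_exact :
    (∀ u j, s.mat.ι j ∈ s.mat.un u ↔ u ∈ s.atoms j) ∧
    ∀ r i, ((s.mat.ι 0, s.mat.ι i.succ) ∈ s.mat.bin r ↔ r ∈ s.outRoles i) ∧
      ((s.mat.ι i.succ, s.mat.ι 0) ∈ s.mat.bin r ↔ r ∈ s.inRoles i) := by
  obtain ⟨W, ι, un, bin, hinj, hsat, hun, hbin⟩ := s.realizable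
  obtain ⟨g, ⟨hgu, hgb⟩, hgι⟩ := s.mat.hom W ι un bin (s.isDLMod_inst hinj hsat
    (fun u j => (hun u j).2) (fun r i => (hbin r i).1.2) (fun r i => (hbin r i).2.2))
  have hg : ∀ j, g (s.mat.ι j) = ι j := fun j => hgι j (s.mem_inst_dom j)
  have hmod := s.mat.isDLMod
  refine ⟨fun u j => ⟨fun h => ?_, fun h => hmod.2.1 u j h⟩, fun r i => ⟨⟨fun h => ?_,
    fun h => hmod.2.2.1 r _ ⟨i, Or.inl ⟨rfl, h⟩⟩⟩, ⟨fun h => ?_,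
    fun h => hmod.2.2.1 r _ ⟨i, Or.inr ⟨rfl, h⟩⟩⟩⟩⟩
  · simpa [hg, hun] using hgu u _ (s.mat_mem_nbhdM j) h
  · simpa [hg, hbin] using hgb r _ _ (s.mat_mem_nbhdM 0) (s.mat_mem_nbhdM i.succ) h
  · simpa [hg, hbin] using hgb r _ _ (s.mat_mem_nbhdM i.succ) (s.mat_mem_nbhdM 0) h

lemma mat_injective : Injective s.mat.ι := s.mat.isDLMod.1

def Child : Type := {w : s.mat.W // w ∈ NbhdM s.mat.bin (s.mat.ι 0) ∧ w ∉ range s.mat.ι}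

lemma Child.ne_root (c : s.Child) : c.1 ≠ s.mat.ι 0 := fun h => c.2.2 ⟨0, h.symm⟩

def childSeed (c : s.Child) : S.Seed where
  n := 1
  one_le := le_rfl
  le_size := S.one_le_size
  atoms := ![{u | c.1 ∈ s.mat.un u}, s.atoms 0]
  outRoles _ := {r | (c.1, s.mat.ι 0) ∈ s.mat.bin r}
  inRoles _ := {r | (s.mat.ι 0, c.1) ∈ s.mat.bin r}
  roles_nonempty _ := by
    obtain ⟨h | ⟨r, h | h⟩, -⟩ := c.2
    exacts [absurd h (c.ne_root s), ⟨r, Or.inr h⟩, ⟨r, Or.inl h⟩]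
  atoms_subset j u hu := by
    cases j using Fin.cases with
    | zero => exact s.mat.sigU u ⟨c.1, hu⟩
    | succ i => fin_cases i; exact s.atoms_subset 0 hu
  outRoles_subset _ r hr := s.mat.sigR r ⟨_, hr⟩
  inRoles_subset _ r hr := s.mat.sigR r ⟨_, hr⟩
  realizable := by
    refine ⟨s.mat.W, ![c.1, s.mat.ι 0], s.mat.un, s.mat.bin, ?_, s.mat.isDLMod.2.2.2,
      fun u j => ?_, fun r i => ?_⟩
    · intro i j hij
      fin_cases i <;> fin_cases j <;> simp_all [(c.ne_root s).symm, c.ne_root s]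
    · fin_cases j
      exacts [Iff.rfl, (s.mat_exact.1 u 0)]
    · fin_cases i
      exact ⟨Iff.rfl, Iff.rfl⟩

lemma isDLMod_inst_of_loopFree {W : Type} {t : Fin (s.n + 1) → W} {un : U → Set W}
    {bin : R → Set (W × W)} (hloop : ∀ r x, (x, x) ∉ bin r)
    (hinj : Injective (t ∘ Fin.succ))
    (hsat : S.O.toOnt.Sat un bin) (hun : ∀ u j, u ∈ s.atoms j → t j ∈ un u)
    (hout : ∀ r i, r ∈ s.outRoles i → (t 0, t i.succ) ∈ bin r)
    (hin : ∀ r i, r ∈ s.inRoles i → (t i.succ, t 0) ∈ bin r) :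
    IsDLMod S.O.toOnt s.inst t un bin := by
  have hne : ∀ i : Fin s.n, t 0 ≠ t i.succ := fun i he => by
    obtain ⟨r, hr | hr⟩ := s.roles_nonempty i
    · have hedge := hout r i hr
      rw [← he] at hedge
      exact hloop r _ hedge
    · have hedge := hin r i hr
      rw [← he] at hedge
      exact hloop r _ hedge
  refine s.isDLMod_inst ?_ hsat hun hout hin
  intro j j' h
  cases j using Fin.cases <;> cases j' using Fin.cases
  · rfl
  · exact absurd h (hne _)
  · exact absurd h.symm (hne _)
  · exact congrArg _ (hinj h)

lemma isDLMod_childSeed_inst (c : s.Child) {W : Type} {un : U → Set W}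
    {bin : R → Set (W × W)} (hloop : ∀ r x, (x, x) ∉ bin r) (hsat : S.O.toOnt.Sat un bin)
    {h : s.mat.W → W} (hh : IsHomOn s.mat.un s.mat.bin un bin (NbhdM s.mat.bin (s.mat.ι 0)) h) :
    IsDLMod S.O.toOnt (s.childSeed c).inst (Fin.cases (h c.1) fun _ => h (s.mat.ι 0)) un bin := by
  have hc := c.2.1
  have h0 := s.mat_mem_nbhdM 0
  refine (s.childSeed c).isDLMod_inst_of_loopFree hloop
    (fun i j _ => Subsingleton.elim (α := Fin 1) i j) hsat
    (fun u j hu => ?_) (fun r i hr => hh.2 r _ _ hc h0 hr)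
    (fun r i hr => hh.2 r _ _ h0 hc hr)
  fin_cases j
  · exact hh.1 u _ hc hu
  · exact hh.1 u _ h0 ((s.mat_exact.1 u 0).2 hu)

def matEnum : Option (Fin s.n ⊕ s.Child) → s.mat.W :=
  fun o => o.elim (s.mat.ι 0) (Sum.elim (fun i => s.mat.ι i.succ) Subtype.val)

lemma isNbhdEnum_matEnum : IsNbhdEnum s.mat.bin (s.mat.ι 0) s.matEnum := by
  refine ⟨?_, rfl, ?_⟩
  · have hι := s.mat_injective
    rintro (_ | i | c) (_ | j | c') h <;> dsimp only [matEnum, Option.elim, Sum.elim] at h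
    · rfl
    · exact absurd (hι h) (Fin.succ_ne_zero j).symm
    · exact absurd h.symm (c'.ne_root s)
    · exact absurd (hι h) (Fin.succ_ne_zero i)
    · rw [Fin.succ_inj.1 (hι h)]
    · exact absurd ⟨_, h⟩ c'.2.2
    · exact absurd h (c.ne_root s)
    · exact absurd ⟨_, h.symm⟩ c.2.2
    · rw [Subtype.ext h]
  · ext w
    constructor
    · rintro ⟨_ | i | c, rfl⟩
      exacts [s.mat_mem_nbhdM 0, s.mat_mem_nbhdM i.succ, c.2.1]
    · intro hw
      by_cases hι : w ∈ range s.mat.ι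
      · obtain ⟨j, rfl⟩ := hι
        cases j using Fin.cases with
        | zero => exact ⟨none, rfl⟩
        | succ i => exact ⟨some (Sum.inl i), rfl⟩
      · exact ⟨some (Sum.inr ⟨w, hw, hι⟩), rfl⟩

end Seed

def rootMat : OneMat S.O S.D S.a :=
  (S.oneMaterializable _ S.D S.a S.isBouquet S.irrefl S.sigIn S.outdegLE S.consistent
    |>.nonempty_oneMat S.irrefl S.sigIn).some

def Base : Type := {w // w ∈ NbhdM S.rootMat.bin (S.rootMat.ι S.a)}

def root : S.Base := ⟨S.rootMat.ι S.a, Or.inl rfl⟩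

variable {S}

def Named (z : S.Base) : Prop := z.1 ∈ S.rootMat.ι '' S.D.dom

/-- The edges of the 1-materialization kept at the base level: those at the root and those
between named elements. Dropping the others bounds the outdegree of the base seeds. -/
def Glued (y z : S.Base) : Prop := y = S.root ∨ z = S.root ∨ (Named y ∧ Named z)

variable (S) in
def baseBin (r : R) : Set (S.Base × S.Base) :=
  {p | Glued p.1 p.2 ∧ (p.1.1, p.2.1) ∈ S.rootMat.bin r}

def baseNbrs (y : S.Base) : Set S.Base :=
  {z | ∃ r, (y, z) ∈ S.baseBin r ∨ (z, y) ∈ S.baseBin r}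

variable (S) in
def baseOf {d : S.V} (hd : d ∈ S.D.dom) : S.Base :=
  ⟨S.rootMat.ι d, by
    rcases S.isBouquet.2 d hd with rfl | ⟨-, r, h | h⟩
    exacts [Or.inl rfl, Or.inr ⟨r, Or.inl (S.rootMat.isDLMod.2.2.1 r _ h)⟩,
      Or.inr ⟨r, Or.inr (S.rootMat.isDLMod.2.2.1 r _ h)⟩]⟩

lemma named_root : Named S.root := ⟨S.a, S.isBouquet.1, rfl⟩

lemma ne_of_mem_baseNbrs {y z : S.Base} (hz : z ∈ baseNbrs y) : z ≠ y := by
  rintro rfl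
  obtain ⟨r, h | h⟩ := hz <;> exact S.rootMat.loopFree r _ h.2

lemma mem_baseNbrs_root {z : S.Base} (hz : z ≠ S.root) : z ∈ baseNbrs S.root := by
  obtain ⟨w, hw | ⟨r, h | h⟩⟩ := z
  · exact absurd (Subtype.ext hw) hz
  · exact ⟨r, Or.inl ⟨Or.inl rfl, h⟩⟩
  · exact ⟨r, Or.inr ⟨Or.inr (Or.inl rfl), h⟩⟩

lemma glued_of_ne_root {y z : S.Base} (hy : y ≠ S.root) (hz : z ∈ baseNbrs y) :
    z = S.root ∨ (Named y ∧ Named z) := by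
  obtain ⟨r, ⟨h, -⟩ | ⟨h, -⟩⟩ := hz
  · exact h.resolve_left hy
  · rcases h with h | h | h
    exacts [Or.inl h, absurd h hy, Or.inr h.symm]

lemma named_of_mem_baseNbrs {y z : S.Base} (hy : y ≠ S.root) (hz : z ∈ baseNbrs y) :
    Named z := by
  rcases glued_of_ne_root hy hz with rfl | h
  exacts [named_root, h.2]

lemma finite_dom : S.D.dom.Finite :=
  (S.outdegLE.1.insert S.a).subset fun v hv => S.isBouquet.2 v hv

lemma finite_named : {z : S.Base | Named z}.Finite :=
  Finite.preimage Subtype.val_injective.injOn (finite_dom.image _)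

lemma ncard_named_le : {z : S.Base | Named z}.ncard ≤ S.O.size + 1 :=
  calc {z : S.Base | Named z}.ncard
      ≤ (S.rootMat.ι '' S.D.dom).ncard :=
        ncard_le_ncard_of_injOn Subtype.val (fun z hz => hz) Subtype.val_injective.injOn
          (finite_dom.image _)
    _ ≤ S.D.dom.ncard := ncard_image_le finite_dom
    _ ≤ (insert S.a (Nb S.D S.a)).ncard :=
        ncard_le_ncard (fun v hv => S.isBouquet.2 v hv) (S.outdegLE.1.insert S.a)
    _ ≤ S.O.size + 1 := (ncard_insert_le _ _).trans (by have := S.outdegLE.2; omega)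

lemma finite_baseNbrs {y : S.Base} (hy : y ≠ S.root) : (baseNbrs y).Finite :=
  finite_named.subset fun _ hz => named_of_mem_baseNbrs hy hz

lemma ncard_baseNbrs_le {y : S.Base} (hy : y ≠ S.root) : (baseNbrs y).ncard ≤ S.O.size := by
  by_cases hn : Named y
  · have hsub : baseNbrs y ⊆ {z | Named z} \ {y} :=
      fun z hz => ⟨named_of_mem_baseNbrs hy hz, ne_of_mem_baseNbrs hz⟩
    have := ncard_le_ncard hsub finite_named.sdiff
    rw [ncard_sdiff_singleton_of_mem (s := {z | Named z}) hn] at this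
    have := ncard_named_le (S := S)
    omega
  · have hsub : baseNbrs y ⊆ {S.root} :=
      fun z hz => (glued_of_ne_root hy hz).resolve_right fun h => hn h.1
    exact (ncard_le_ncard hsub (finite_singleton _)).trans (ncard_singleton _ ▸ S.one_le_size)

lemma root_mem_baseNbrs {y : S.Base} (hy : y ≠ S.root) : S.root ∈ baseNbrs y := by
  obtain ⟨w, hw | ⟨r, h | h⟩⟩ := y
  · exact absurd (Subtype.ext hw) hy
  · exact ⟨r, Or.inr ⟨Or.inl rfl, h⟩⟩
  · exact ⟨r, Or.inl ⟨Or.inr (Or.inl rfl), h⟩⟩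

lemma Glued.symm {y z : S.Base} (h : Glued y z) : Glued z y := by
  rcases h with h | h | h
  exacts [Or.inr (Or.inl h), Or.inl h, Or.inr (Or.inr h.symm)]

lemma glued_of_mem_baseNbrs {y z : S.Base} (hz : z ∈ baseNbrs y) : Glued y z := by
  obtain ⟨r, ⟨h, -⟩ | ⟨h, -⟩⟩ := hz
  exacts [h, h.symm]

open Classical in
def nbrList (y : S.Base) : List S.Base :=
  if h : (baseNbrs y).Finite then h.toFinset.toList else []

lemma nodup_nbrList (y : S.Base) : (nbrList y).Nodup := by
  unfold nbrList; split_ifs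
  exacts [Finset.nodup_toList _, List.nodup_nil]

lemma mem_nbrList {y : S.Base} (hy : y ≠ S.root) {z : S.Base} :
    z ∈ nbrList y ↔ z ∈ baseNbrs y := by
  rw [nbrList, dif_pos (finite_baseNbrs hy), Finset.mem_toList, Finite.mem_toFinset]

lemma length_nbrList {y : S.Base} (hy : y ≠ S.root) :
    (nbrList y).length = (baseNbrs y).ncard := by
  rw [nbrList, dif_pos (finite_baseNbrs hy), Finset.length_toList,
    ncard_eq_toFinset_card _ (finite_baseNbrs hy)]

def baseEnum (y : S.Base) : Fin ((nbrList y).length + 1) → S.Base := Fin.cases y (nbrList y).get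

lemma baseEnum_injective {y : S.Base} (hy : y ≠ S.root) : Injective (baseEnum y) := by
  have hne : ∀ i, (nbrList y).get i ≠ y := fun i =>
    ne_of_mem_baseNbrs ((mem_nbrList hy).1 (List.get_mem _ _))
  intro j j' h
  cases j using Fin.cases <;> cases j' using Fin.cases <;>
    simp only [baseEnum, Fin.cases_zero, Fin.cases_succ] at h
  · rfl
  · exact absurd h.symm (hne _)
  · exact absurd h (hne _)
  · rw [(nodup_nbrList y).get_inj_iff.1 h]

def baseSeed (y : S.Base) (hy : y ≠ S.root) : S.Seed where
  n := (nbrList y).length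
  one_le := List.length_pos_iff_exists_mem.2 ⟨S.root, (mem_nbrList hy).2 (root_mem_baseNbrs hy)⟩
  le_size := length_nbrList hy ▸ ncard_baseNbrs_le hy
  atoms j := {u | (baseEnum y j).1 ∈ S.rootMat.un u}
  outRoles i := {r | (y, (nbrList y).get i) ∈ S.baseBin r}
  inRoles i := {r | ((nbrList y).get i, y) ∈ S.baseBin r}
  roles_nonempty i := by
    obtain ⟨r, h⟩ := (mem_nbrList hy).1 (List.get_mem _ i)
    exact ⟨r, h⟩
  atoms_subset j u hu := S.rootMat.sigU u ⟨_, hu⟩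
  outRoles_subset i r hr := S.rootMat.sigR r ⟨_, hr.2⟩
  inRoles_subset i r hr := S.rootMat.sigR r ⟨_, hr.2⟩
  realizable := by
    refine ⟨_, fun j => (baseEnum y j).1, S.rootMat.un, S.rootMat.bin,
      Subtype.val_injective.comp (baseEnum_injective hy), S.rootMat.isDLMod.2.2.2,
      fun u j => Iff.rfl, fun r i => ?_⟩
    have hg := glued_of_mem_baseNbrs ((mem_nbrList hy).1 (List.get_mem _ i))
    exact ⟨(and_iff_right hg).symm, (and_iff_right hg.symm).symm⟩

variable (S) in
def Step : Type := Σ s : S.Seed, s.Child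

open Classical in
def seedAt : S.Base → List S.Step → Option S.Seed
  | y, [] => if hy : y = S.root then none else some (baseSeed y hy)
  | _, b :: _ => some (b.1.childSeed b.2)

def Valid : S.Base → List S.Step → Prop
  | _, [] => True
  | y, b :: l => Valid y l ∧ seedAt y l = some b.1

variable (S) in
/-- The vertices of the unravelling: a base element followed by a path of new elements, each
a child in the 1-materialization of the seed of its predecessor. -/
def Vertex : Type := {p : S.Base × List S.Step // Valid p.1 p.2}

def atomsAt : S.Base × List S.Step → Set U
  | (y, []) => {u | y.1 ∈ S.rootMat.un u}
  | (_, b :: _) => {u | b.2.1 ∈ b.1.mat.un u}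

def Edge (r : R) (p q : S.Base × List S.Step) : Prop :=
  (p.2 = [] ∧ q.2 = [] ∧ (p.1, q.1) ∈ S.baseBin r) ∨
  (∃ b : S.Step, q = (p.1, b :: p.2) ∧ (b.1.mat.ι 0, b.2.1) ∈ b.1.mat.bin r) ∨
  (∃ b : S.Step, p = (q.1, b :: q.2) ∧ (b.2.1, b.1.mat.ι 0) ∈ b.1.mat.bin r)

variable (S) in
def treeUn (u : U) : Set S.Vertex := {v | u ∈ atomsAt v.1}

variable (S) in
def treeBin (r : R) : Set (S.Vertex × S.Vertex) := {vw | Edge r vw.1.1 vw.2.1}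

/-- The leaves of the seed of a vertex, as vertices: the base neighbours for a base vertex, the
predecessor otherwise. Indexed by `ℕ`, so that it applies to the `Fin` indices of any seed. -/
def anchor : S.Base × List S.Step → ℕ → S.Base × List S.Step
  | (y, []), k => ((nbrList y).getD k y, [])
  | (y, _ :: l), _ => (y, l)

lemma ne_of_length_lt {α β : Type} {p q : α × List β} (h : p.2.length < q.2.length) : p ≠ q := by
  rintro rfl
  exact lt_irrefl _ h

lemma edge_base {r : R} {y z : S.Base} : Edge r (y, []) (z, []) ↔ (y, z) ∈ S.baseBin r := by
  refine ⟨?_, fun h => Or.inl ⟨rfl, rfl, h⟩⟩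
  rintro (⟨-, -, h⟩ | ⟨b, h, -⟩ | ⟨b, h, -⟩) <;> simp_all

lemma edge_child {r : R} {p : S.Base × List S.Step} {b : S.Step} :
    Edge r p (p.1, b :: p.2) ↔ (b.1.mat.ι 0, b.2.1) ∈ b.1.mat.bin r := by
  refine ⟨?_, fun h => Or.inr (Or.inl ⟨b, rfl, h⟩)⟩
  rintro (⟨-, h, -⟩ | ⟨b', h, hr⟩ | ⟨b', h, -⟩)
  · simp at h
  · obtain ⟨rfl, -⟩ := List.cons.inj (congrArg Prod.snd h)
    exact hr
  · exact absurd h (ne_of_length_lt (Nat.lt_succ_of_lt (Nat.lt_succ_self _)))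

lemma edge_parent {r : R} {p : S.Base × List S.Step} {b : S.Step} :
    Edge r (p.1, b :: p.2) p ↔ (b.2.1, b.1.mat.ι 0) ∈ b.1.mat.bin r := by
  refine ⟨?_, fun h => Or.inr (Or.inr ⟨b, rfl, h⟩)⟩
  rintro (⟨h, -, -⟩ | ⟨b', h, -⟩ | ⟨b', h, hr⟩)
  · simp at h
  · exact absurd h (ne_of_length_lt (Nat.lt_succ_of_lt (Nat.lt_succ_self _)))
  · obtain ⟨rfl, -⟩ := List.cons.inj (congrArg Prod.snd h)
    exact hr

lemma not_edge_self (r : R) (p : S.Base × List S.Step) : ¬ Edge r p p := by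
  rintro (⟨-, -, h⟩ | ⟨b, h, -⟩ | ⟨b, h, -⟩)
  · exact S.rootMat.loopFree r _ h.2
  all_goals exact ne_of_length_lt (Nat.lt_succ_self _) h

lemma seedAt_nil {y : S.Base} (hy : y ≠ S.root) : seedAt y [] = some (baseSeed y hy) :=
  dif_neg hy

lemma seedAt_root : seedAt S.root [] = none := dif_pos rfl

lemma exists_baseSeed_of_seedAt_nil {y : S.Base} {s : S.Seed} (hs : seedAt y [] = some s) :
    ∃ hy : y ≠ S.root, baseSeed y hy = s := by
  by_cases hy : y = S.root
  · simp [hy, seedAt_root] at hs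
  · exact ⟨hy, Option.some_inj.1 ((seedAt_nil hy).symm.trans hs)⟩

lemma anchor_nil (y : S.Base) (i : Fin (nbrList y).length) :
    anchor (y, []) i = ((nbrList y).get i, []) := by
  simp [anchor]

lemma atomsAt_eq {y : S.Base} {l : List S.Step} {s : S.Seed} (hs : seedAt y l = some s) :
    atomsAt (y, l) = s.atoms 0 := by
  cases l with
  | nil =>
    obtain ⟨hy, rfl⟩ := exists_baseSeed_of_seedAt_nil hs
    rfl
  | cons b l =>
    cases hs
    rfl

lemma atomsAt_anchor {y : S.Base} {l : List S.Step} {s : S.Seed} (hv : Valid y l)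
    (hs : seedAt y l = some s) (i : Fin s.n) : atomsAt (anchor (y, l) i) = s.atoms i.succ := by
  cases l with
  | nil =>
    obtain ⟨hy, rfl⟩ := exists_baseSeed_of_seedAt_nil hs
    rw [anchor_nil y i]
    rfl
  | cons b l =>
    cases hs
    fin_cases i
    exact atomsAt_eq hv.2

lemma edge_anchor_iff {y : S.Base} {l : List S.Step} {s : S.Seed} (hs : seedAt y l = some s)
    (r : R) (i : Fin s.n) :
    (Edge r (y, l) (anchor (y, l) i) ↔ r ∈ s.outRoles i) ∧
      (Edge r (anchor (y, l) i) (y, l) ↔ r ∈ s.inRoles i) := by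
  cases l with
  | nil =>
    obtain ⟨hy, rfl⟩ := exists_baseSeed_of_seedAt_nil hs
    rw [anchor_nil y i, edge_base, edge_base]
    exact ⟨Iff.rfl, Iff.rfl⟩
  | cons b l =>
    cases hs
    exact ⟨edge_parent (p := (y, l)), edge_child (p := (y, l))⟩

lemma valid_anchor {p : S.Base × List S.Step} (hv : Valid p.1 p.2) (k : ℕ) :
    Valid (anchor p k).1 (anchor p k).2 := by
  obtain ⟨y, _ | ⟨b, l⟩⟩ := p
  exacts [trivial, hv.1]

lemma length_anchor_le (p : S.Base × List S.Step) (k : ℕ) :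
    (anchor p k).2.length ≤ p.2.length := by
  obtain ⟨y, _ | ⟨b, l⟩⟩ := p <;> simp [anchor]

lemma anchor_ne {y : S.Base} {l : List S.Step} {s : S.Seed} (hs : seedAt y l = some s)
    (i : Fin s.n) : anchor (y, l) i ≠ (y, l) := by
  intro h
  obtain ⟨r, hr | hr⟩ := s.roles_nonempty i
  · have hedge := (edge_anchor_iff hs r i).1.2 hr
    rw [h] at hedge
    exact not_edge_self r _ hedge
  · have hedge := (edge_anchor_iff hs r i).2.2 hr
    rw [h] at hedge
    exact not_edge_self r _ hedge

lemma anchor_injective {y : S.Base} {l : List S.Step} {s : S.Seed} (hs : seedAt y l = some s) :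
    Injective fun i : Fin s.n => anchor (y, l) i := by
  cases l with
  | nil =>
    obtain ⟨hy, rfl⟩ := exists_baseSeed_of_seedAt_nil hs
    intro i j h
    simp only [anchor_nil y i, anchor_nil y j, Prod.mk.injEq, and_true] at h
    exact (nodup_nbrList y).get_inj_iff.1 h
  | cons b l =>
    cases hs
    intro i j _
    exact Subsingleton.elim (α := Fin 1) i j

lemma adjacent_cases {p q : S.Base × List S.Step} (h : ∃ r, Edge r p q ∨ Edge r q p) :
    (p.2 = [] ∧ q.2 = [] ∧ q.1 ∈ baseNbrs p.1) ∨ (∃ b, q = (p.1, b :: p.2)) ∨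
      ∃ b, p = (q.1, b :: q.2) := by
  obtain ⟨r, h | h⟩ := h
  · rcases h with ⟨hp, hq, h⟩ | ⟨b, h, -⟩ | ⟨b, h, -⟩
    exacts [Or.inl ⟨hp, hq, r, Or.inl h⟩, Or.inr (Or.inl ⟨b, h⟩),
      Or.inr (Or.inr ⟨b, h⟩)]
  · rcases h with ⟨hq, hp, h⟩ | ⟨b, h, -⟩ | ⟨b, h, -⟩
    exacts [Or.inl ⟨hp, hq, r, Or.inr h⟩, Or.inr (Or.inr ⟨b, h⟩),
      Or.inr (Or.inl ⟨b, h⟩)]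

variable {s : S.Seed}

/-- The neighbourhood of a vertex with seed `s`, indexed like that of the root of `s.mat`. -/
def vertexEnum (v : S.Vertex) (hs : seedAt v.1.1 v.1.2 = some s) :
    Option (Fin s.n ⊕ s.Child) → S.Vertex
  | none => v
  | some (.inl i) => ⟨anchor v.1 i, valid_anchor v.2 i⟩
  | some (.inr c) => ⟨(v.1.1, ⟨s, c⟩ :: v.1.2), v.2, hs⟩

lemma vertexEnum_injective (v : S.Vertex) (hs : seedAt v.1.1 v.1.2 = some s) :
    Injective (vertexEnum v hs) := by
  have hlt : ∀ (k : ℕ) (b : S.Step), (anchor v.1 k).2.length < (b :: v.1.2).length :=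
    fun k b => Nat.lt_succ_of_le (length_anchor_le v.1 k)
  rintro (_ | i | c) (_ | j | c') h <;> replace h := congrArg Subtype.val h <;>
    simp only [vertexEnum] at h
  · rfl
  · exact absurd h.symm (anchor_ne hs j)
  · exact absurd h (ne_of_length_lt (Nat.lt_succ_self _))
  · exact absurd h (anchor_ne hs i)
  · rw [anchor_injective hs h]
  · exact absurd h (ne_of_length_lt (hlt _ _))
  · exact absurd h.symm (ne_of_length_lt (Nat.lt_succ_self _))
  · exact absurd h.symm (ne_of_length_lt (hlt _ _))
  · rw [eq_of_heq (Sigma.mk.inj (List.cons.inj (Prod.mk.inj h).2).1).2]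

lemma mem_range_vertexEnum {v w : S.Vertex} (hs : seedAt v.1.1 v.1.2 = some s)
    (h : ∃ r, Edge r v.1 w.1 ∨ Edge r w.1 v.1) : w ∈ range (vertexEnum v hs) := by
  obtain ⟨⟨y, l⟩, hv⟩ := v
  obtain ⟨⟨z, m⟩, hw⟩ := w
  rcases adjacent_cases h with ⟨rfl, rfl, hz⟩ | ⟨b, h⟩ | ⟨b, h⟩
  · obtain ⟨hy, rfl⟩ := exists_baseSeed_of_seedAt_nil hs
    obtain ⟨i, rfl⟩ := List.mem_iff_get.1 ((mem_nbrList hy).2 hz)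
    exact ⟨some (.inl i), Subtype.ext (anchor_nil y i)⟩
  · simp only [Prod.mk.injEq] at h
    obtain ⟨rfl, rfl⟩ := h
    obtain ⟨s', c⟩ := b
    obtain rfl : s' = s := Option.some_inj.1 (hw.2.symm.trans hs)
    exact ⟨some (.inr c), rfl⟩
  · simp only [Prod.mk.injEq] at h
    obtain ⟨rfl, rfl⟩ := h
    cases hs
    exact ⟨some (.inl ⟨0, Nat.one_pos⟩), rfl⟩

lemma isNbhdEnum_vertexEnum (v : S.Vertex) (hs : seedAt v.1.1 v.1.2 = some s) :
    IsNbhdEnum S.treeBin v (vertexEnum v hs) := by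
  refine ⟨vertexEnum_injective v hs, rfl, Set.ext fun w => ⟨?_, ?_⟩⟩
  · rintro ⟨_ | i | c, rfl⟩
    · exact Or.inl rfl
    · obtain ⟨r, hr | hr⟩ := s.roles_nonempty i
      exacts [Or.inr ⟨r, Or.inl ((edge_anchor_iff hs r i).1.2 hr)⟩,
        Or.inr ⟨r, Or.inr ((edge_anchor_iff hs r i).2.2 hr)⟩]
    · obtain ⟨h | ⟨r, h | h⟩, -⟩ := c.2
      exacts [absurd h (c.ne_root s), Or.inr ⟨r, Or.inl (edge_child.2 h)⟩,
        Or.inr ⟨r, Or.inr (edge_parent.2 h)⟩]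
  · rintro (rfl | h)
    exacts [⟨none, rfl⟩, mem_range_vertexEnum hs h]

lemma locallySat_of_seedAt (v : S.Vertex) (hs : seedAt v.1.1 v.1.2 = some s) :
    LocallySat S.O.toOnt S.treeUn S.treeBin v := by
  refine locallySat_of_nbhdEnum s.mat.isDLMod.2.2.2 (isNbhdEnum_vertexEnum v hs)
    s.isNbhdEnum_matEnum ?_ ?_ ?_
  · rintro u (_ | i | c)
    · exact (atomsAt_eq hs ▸ s.mat_exact.1 u 0).symm
    · exact (atomsAt_anchor v.2 hs i ▸ s.mat_exact.1 u i.succ).symm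
    · exact Iff.rfl
  · rintro r (_ | i | c)
    · exact iff_of_false (not_edge_self r _) (s.mat.loopFree r _)
    · exact (edge_anchor_iff hs r i).1.trans (s.mat_exact.2 r i).1.symm
    · exact edge_child
  · rintro r (_ | i | c)
    · exact iff_of_false (not_edge_self r _) (s.mat.loopFree r _)
    · exact (edge_anchor_iff hs r i).2.trans (s.mat_exact.2 r i).2.symm
    · exact edge_parent

variable (S) in
def rootVertex : S.Vertex := ⟨(S.root, []), trivial⟩

def rootEnum : Option {z : S.Base // z ≠ S.root} → S.Vertex :=
  fun o => o.elim S.rootVertex fun z => ⟨(z.1, []), trivial⟩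

def rootMatEnum : Option {z : S.Base // z ≠ S.root} → S.rootMat.W :=
  fun o => o.elim (S.rootMat.ι S.a) fun z => z.1.1

lemma isNbhdEnum_rootEnum : IsNbhdEnum S.treeBin S.rootVertex (rootEnum (S := S)) := by
  refine ⟨?_, rfl, Set.ext fun w => ⟨?_, ?_⟩⟩
  · rintro (_ | z) (_ | z') h <;> replace h := congrArg (fun v => v.1.1) h <;>
      simp only [rootEnum, rootVertex, Option.elim] at h
    exacts [rfl, absurd h.symm z'.2, absurd h z.2, congrArg some (Subtype.ext h)]
  · rintro ⟨_ | z, rfl⟩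
    · exact Or.inl rfl
    · obtain ⟨r, h | h⟩ := mem_baseNbrs_root z.2
      exacts [Or.inr ⟨r, Or.inl (edge_base.2 h)⟩, Or.inr ⟨r, Or.inr (edge_base.2 h)⟩]
  · rintro (rfl | h)
    · exact ⟨none, rfl⟩
    obtain ⟨⟨z, m⟩, hw⟩ := w
    rcases adjacent_cases h with ⟨-, rfl, hz⟩ | ⟨b, h⟩ | ⟨b, h⟩
    · exact ⟨some ⟨z, ne_of_mem_baseNbrs hz⟩, rfl⟩
    · simp only [Prod.mk.injEq] at h
      obtain ⟨rfl, rfl⟩ := h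
      exact absurd hw.2 (by simp [rootVertex, seedAt_root])
    · simp [rootVertex] at h

lemma isNbhdEnum_rootMatEnum :
    IsNbhdEnum S.rootMat.bin (S.rootMat.ι S.a) (rootMatEnum (S := S)) := by
  refine ⟨?_, rfl, Set.ext fun w => ⟨?_, fun hw => ?_⟩⟩
  · rintro (_ | z) (_ | z') h <;> simp only [rootMatEnum, Option.elim] at h
    exacts [rfl, absurd (Subtype.ext h.symm) z'.2, absurd (Subtype.ext h) z.2,
      congrArg some (Subtype.ext (Subtype.ext h))]
  · rintro ⟨_ | z, rfl⟩
    exacts [Or.inl rfl, z.1.2]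
  · by_cases hr : (⟨w, hw⟩ : S.Base) = S.root
    · exact ⟨none, (congrArg Subtype.val hr).symm⟩
    · exact ⟨some ⟨⟨w, hw⟩, hr⟩, rfl⟩

lemma locallySat_rootVertex : LocallySat S.O.toOnt S.treeUn S.treeBin S.rootVertex := by
  refine locallySat_of_nbhdEnum S.rootMat.isDLMod.2.2.2 isNbhdEnum_rootEnum
    isNbhdEnum_rootMatEnum (fun u o => ?_) (fun r o => ?_) (fun r o => ?_)
  · cases o <;> exact Iff.rfl
  · rcases o with _ | z
    · exact iff_of_false (not_edge_self r _) (S.rootMat.loopFree r _)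
    · exact edge_base.trans (and_iff_right (Or.inl rfl))
  · rcases o with _ | z
    · exact iff_of_false (not_edge_self r _) (S.rootMat.loopFree r _)
    · exact edge_base.trans (and_iff_right (Or.inr (Or.inl rfl)))

theorem sat_tree : S.O.toOnt.Sat S.treeUn S.treeBin := by
  refine DLOnt.sat_of_forall_locallySat S.depth_le fun v => ?_
  cases hs : seedAt v.1.1 v.1.2 with
  | some s => exact locallySat_of_seedAt v hs
  | none =>
    obtain ⟨⟨y, _ | _⟩, hv⟩ := v
    · obtain rfl : y = S.root := by by_contra hy; simp [seedAt_nil hy] at hs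
      exact locallySat_rootVertex
    · simp [seedAt] at hs

variable (S) in
structure LoopFreeModel : Type 1 where
  W : Type
  ι : S.V → W
  un : U → Set W
  bin : R → Set (W × W)
  isDLMod : IsDLMod S.O.toOnt S.D ι un bin
  loopFree : ∀ r x, (x, x) ∉ bin r

def LoopFreeModel.double {W : Type} {ι : S.V → W} {un : U → Set W} {bin : R → Set (W × W)}
    (h : IsDLMod S.O.toOnt S.D ι un bin) : S.LoopFreeModel :=
  ⟨W × Bool, fun d => (ι d, true), doubleUn un, doubleBin bin, h.double S.irrefl,
    doubleBin_loopFree bin⟩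

variable (M : S.LoopFreeModel)

def rootHom : S.rootMat.W → M.W := (S.rootMat.hom _ _ _ _ M.isDLMod).choose

lemma rootHom_spec :
    IsHomOn S.rootMat.un S.rootMat.bin M.un M.bin (NbhdM S.rootMat.bin (S.rootMat.ι S.a))
      (rootHom M) ∧ ∀ d ∈ S.D.dom, rootHom M (S.rootMat.ι d) = M.ι d :=
  (S.rootMat.hom _ _ _ _ M.isDLMod).choose_spec

open Classical in
/-- Junk if `t` is not an embedding of the seed. -/
def seedHom (s : S.Seed) (t : Fin (s.n + 1) → M.W) : s.mat.W → M.W :=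
  if h : IsDLMod S.O.toOnt s.inst t M.un M.bin then (s.mat.hom _ _ _ _ h).choose
  else fun _ => t 0

lemma seedHom_spec {s : S.Seed} {t : Fin (s.n + 1) → M.W}
    (h : IsDLMod S.O.toOnt s.inst t M.un M.bin) :
    IsHomOn s.mat.un s.mat.bin M.un M.bin (NbhdM s.mat.bin (s.mat.ι 0)) (seedHom M s t) ∧
      ∀ j, seedHom M s t (s.mat.ι j) = t j := by
  rw [seedHom, dif_pos h]
  have h := (s.mat.hom _ _ _ _ h).choose_spec
  exact ⟨h.1, fun j => h.2 j (s.mem_inst_dom j)⟩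

def homAt : S.Base × List S.Step → M.W
  | (y, []) => rootHom M y.1
  | (y, b :: l) =>
    seedHom M b.1 (Fin.cases (homAt (y, l)) fun i => homAt (anchor (y, l) i)) b.2.1
termination_by p => p.2.length
decreasing_by
  · simp
  · exact Nat.lt_succ_of_le (length_anchor_le _ _)

def assignment (p : S.Base × List S.Step) (s : S.Seed) : Fin (s.n + 1) → M.W :=
  Fin.cases (homAt M p) fun i => homAt M (anchor p i)

lemma homAt_nil (y : S.Base) : homAt M (y, []) = rootHom M y.1 := by
  rw [homAt]

lemma homAt_cons (y : S.Base) (b : S.Step) (l : List S.Step) :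
    homAt M (y, b :: l) = seedHom M b.1 (assignment M (y, l) b.1) b.2.1 := by
  rw [homAt]
  rfl

lemma rootHom_injOn_named : InjOn (fun z : S.Base => rootHom M z.1) {z | Named z} := by
  rintro z ⟨d, hd, hz⟩ z' ⟨d', hd', hz'⟩ h
  simp only [← hz, ← hz', (rootHom_spec M).2 d hd, (rootHom_spec M).2 d' hd'] at h
  exact Subtype.ext (hz.symm.trans ((congrArg _ (M.isDLMod.1 h)).trans hz'))

lemma isDLMod_assignment {y : S.Base} {l : List S.Step} (hv : Valid y l) {s : S.Seed}
    (hs : seedAt y l = some s) : IsDLMod S.O.toOnt s.inst (assignment M (y, l) s) M.un M.bin := by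
  induction l generalizing s with
  | nil =>
    obtain ⟨hy, rfl⟩ := exists_baseSeed_of_seedAt_nil hs
    have ht : ∀ j, assignment M (y, []) (baseSeed y hy) j = rootHom M (baseEnum y j).1 := by
      intro j
      cases j using Fin.cases with
      | zero => exact homAt_nil M y
      | succ i => exact (congrArg (homAt M) (anchor_nil y i)).trans (homAt_nil M _)
    have hnb : ∀ z : S.Base, z.1 ∈ NbhdM S.rootMat.bin (S.rootMat.ι S.a) := fun z => z.2
    have hhom := (rootHom_spec M).1
    refine (baseSeed y hy).isDLMod_inst_of_loopFree M.loopFree ?_ M.isDLMod.2.2.2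
      (fun u j hu => ht j ▸ hhom.1 u _ (hnb _) hu)
      (fun r i hr => ht 0 ▸ ht i.succ ▸ hhom.2 r _ _ (hnb _) (hnb _) hr.2)
      (fun r i hr => ht 0 ▸ ht i.succ ▸ hhom.2 r _ _ (hnb _) (hnb _) hr.2)
    intro i j h
    simp only [Function.comp_apply, ht] at h
    have hnamed := fun i => named_of_mem_baseNbrs hy ((mem_nbrList hy).1 (List.get_mem _ i))
    exact (nodup_nbrList y).get_inj_iff.1 (rootHom_injOn_named M (hnamed i) (hnamed j) h)
  | cons b l ih =>
    cases hs
    have hb := seedHom_spec M (ih hv.1 hv.2)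
    convert b.1.isDLMod_childSeed_inst b.2 M.loopFree M.isDLMod.2.2.2 hb.1 using 1
    funext j
    cases j using Fin.cases with
    | zero => exact homAt_cons M y b l
    | succ i => exact ((hb.2 0).trans rfl).symm

lemma seedHom_assignment_spec {y : S.Base} {l : List S.Step} (hv : Valid y l) {b : S.Step}
    (hs : seedAt y l = some b.1) :
    IsHomOn b.1.mat.un b.1.mat.bin M.un M.bin (NbhdM b.1.mat.bin (b.1.mat.ι 0))
      (seedHom M b.1 (assignment M (y, l) b.1)) ∧
    seedHom M b.1 (assignment M (y, l) b.1) (b.1.mat.ι 0) = homAt M (y, l) :=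
  let h := seedHom_spec M (isDLMod_assignment M hv hs)
  ⟨h.1, h.2 0⟩

lemma isHom_homAt : IsHom_s13 S.treeUn S.treeBin M.un M.bin fun v => homAt M v.1 := by
  have hnb : ∀ z : S.Base, z.1 ∈ NbhdM S.rootMat.bin (S.rootMat.ι S.a) := fun z => z.2
  refine ⟨fun u v hu => ?_, fun r v w hvw => ?_⟩
  · obtain ⟨⟨y, _ | ⟨b, l⟩⟩, hv⟩ := v
    · exact (homAt_nil M y).symm ▸ (rootHom_spec M).1.1 u _ (hnb y) hu
    · rw [homAt_cons]
      exact (seedHom_assignment_spec M hv.1 hv.2).1.1 u _ b.2.2.1 hu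
  obtain ⟨⟨y, l⟩, hv⟩ := v
  obtain ⟨⟨z, m⟩, hw⟩ := w
  rcases hvw with ⟨rfl, rfl, h⟩ | ⟨b, h, hr⟩ | ⟨b, h, hr⟩
  · simpa only [homAt_nil] using (rootHom_spec M).1.2 r _ _ (hnb y) (hnb z) h.2
  · simp only [Prod.mk.injEq] at h
    obtain ⟨rfl, rfl⟩ := h
    obtain ⟨hb, h0⟩ := seedHom_assignment_spec M hv hw.2
    simpa only [homAt_cons, h0] using hb.2 r _ _ (mem_nbhdM_self _ _) b.2.2.1 hr
  · simp only [Prod.mk.injEq] at h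
    obtain ⟨rfl, rfl⟩ := h
    obtain ⟨hb, h0⟩ := seedHom_assignment_spec M hw hv.2
    simpa only [homAt_cons, h0] using hb.2 r _ _ b.2.2.1 (mem_nbhdM_self _ _) hr

variable (S) in
open Classical in
def treeι (d : S.V) : S.Vertex :=
  if hd : d ∈ S.D.dom then ⟨(S.baseOf hd, []), trivial⟩ else S.rootVertex

lemma treeι_of_mem {d : S.V} (hd : d ∈ S.D.dom) :
    S.treeι d = ⟨(S.baseOf hd, []), trivial⟩ :=
  dif_pos hd

lemma homAt_treeι {d : S.V} (hd : d ∈ S.D.dom) : homAt M (S.treeι d).1 = M.ι d := by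
  rw [treeι_of_mem hd, homAt_nil]
  exact (rootHom_spec M).2 d hd

variable (S) in
theorem exists_isDLMat :
    ∃ (W : Type) (ι : S.V → W) (un : U → Set W) (bin : R → Set (W × W)),
      IsDLMat S.O.toOnt S.D ι un bin := by
  have hdom : ∀ {r p}, p ∈ S.D.bin r → p.1 ∈ S.D.dom ∧ p.2 ∈ S.D.dom :=
    fun {r p} hp => ⟨Or.inr ⟨r, p.2, Or.inl hp⟩, Or.inr ⟨r, p.1, Or.inr hp⟩⟩
  refine exists_isDLMat_of_forall_hom S.treeι sat_tree (fun d hd d' hd' h => ?_)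
    (fun u d hd => ?_) (fun r p hp => ?_) fun W' ι' un' bin' hmod' => ?_
  · rw [treeι_of_mem hd, treeι_of_mem hd'] at h
    exact S.rootMat.isDLMod.1 (congrArg (fun v => v.1.1.1) h)
  · rw [treeι_of_mem (Or.inl ⟨u, hd⟩)]
    exact S.rootMat.isDLMod.2.1 u d hd
  · rw [treeι_of_mem (hdom hp).1, treeι_of_mem (hdom hp).2]
    exact edge_base.2 ⟨Or.inr (Or.inr ⟨⟨_, (hdom hp).1, rfl⟩, ⟨_, (hdom hp).2, rfl⟩⟩),
      S.rootMat.isDLMod.2.2.1 r p hp⟩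
  · refine ⟨fun v => (homAt (.double hmod') v.1).1,
      (isCover_double un' bin').isHom.comp (isHom_homAt (.double hmod')), fun d hd => ?_⟩
    simp only [homAt_treeι _ hd, LoopFreeModel.double]

end Setup

end Unravelling

/-- Let `O` be an ALCHIQ ontology of depth 1.  If for every irreflexive bouquet `D` that is
consistent with `O`, has outdegree at most `|O|`, and uses only relations of `O`, there
exists a 1-materialization of `O` and `D`, then `O` is materializable for the class of all
such bouquets: each of them has a full materialization. -/
theorem stmt13 {U R : Type} (O : DLOntL U R) (hdepth : O.depthLE 1)
    (h1 : ∀ (V : Type) (D : DLInst U R V) (a : V), IsBouquet D a → Irrefl D →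
      SigIn D O → OutdegLE D a O.size → DLConsistent O.toOnt D →
      OneMaterializable O D a) :
    ∀ (V : Type) (D : DLInst U R V) (a : V), IsBouquet D a → Irrefl D →
      SigIn D O → OutdegLE D a O.size → DLConsistent O.toOnt D →
      ∃ (W : Type) (ι : V → W) (un : U → Set W) (bin : R → Set (W × W)),
        IsDLMat O.toOnt D ι un bin := by
  intro V D a hbq hir hsg hdeg hcons
  rcases Nat.eq_zero_or_pos O.size with h0 | hpos
  · exact exists_isDLMat_self (O.sat_of_size_eq_zero h0 D.un D.bin)
  · exact (Setup.mk O hdepth h1 hpos V D a hbq hir hsg hdeg hcons).exists_isDLMat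
end
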